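/- arXiv:2501.03802 — 5 statements merged into one kernel-verified Lean document; each statement's English description precedes it below -/
import Mathlib

section
/- Let q be a prime power and let U be a k-dimensional 𝔽_q-subspace of 𝔽_{q^n} with k ≤ n, and assume that 𝔽_q is the maximum field of linearity of U, i.e. {α ∈ 𝔽_{q^n} : αU ⊆ U} = 𝔽_q. Let e = min{w_{U×U}(P) : P ∈ L_{U×U}} be the minimum weight of a point of the 𝔽_q-linear set L_{U×U} in PG(1,q^n). Then |L_{U×U}| ≤ (q^k−1)(q^k+1)/(q^e−1) − (q+1)(q^k−q^e)/(q^e−1). -/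
noncomputable def linSet (K L : Type*) [Field K] [Field L] [Algebra K L]
    (W : Submodule K (L × L)) : Set (Submodule L (L × L)) :=
  {P | ∃ w : L × L, w ∈ W ∧ w ≠ 0 ∧ P = Submodule.span L {w}}

noncomputable def wt (K L : Type*) [Field K] [Field L] [Algebra K L]
    (W : Submodule K (L × L)) (P : Submodule L (L × L)) : ℕ :=
  Module.finrank K ↥(W ⊓ P.restrictScalars K)

section Aux

variable {K L : Type*} [Field K] [Field L] [Algebra K L] [Fintype K] [Fintype L]

/-- cardinality of a `K`-submodule of `L × L`. -/
lemma card_submodule (V : Submodule K (L × L)) :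
    Nat.card ↥V = Fintype.card K ^ Module.finrank K ↥V := by
  classical
  have : Fintype ↥V := Fintype.ofFinite _
  rw [Nat.card_eq_fintype_card]
  exact Module.card_eq_pow_finrank

lemma card_submodule' (V : Submodule K L) :
    Nat.card ↥V = Fintype.card K ^ Module.finrank K ↥V := by
  classical
  have : Fintype ↥V := Fintype.ofFinite _
  rw [Nat.card_eq_fintype_card]
  exact Module.card_eq_pow_finrank

end Aux

set_option maxHeartbeats 1000000 in
theorem statement_0 (q n k : ℕ) (hq : IsPrimePow q) (hkn : k ≤ n)
    (K L : Type*) [Field K] [Field L] [Algebra K L] [Fintype K] [Fintype L]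
    (hK : Fintype.card K = q) (hL : Fintype.card L = q ^ n)
    (U : Submodule K L) (hUk : Module.finrank K ↥U = k)
    (hmax : {α : L | ∀ u ∈ U, α * u ∈ U} = Set.range (algebraMap K L))
    (e : ℕ)
    (he : e = sInf {i : ℕ | ∃ P ∈ linSet K L (U.prod U), wt K L (U.prod U) P = i}) :
    (Set.ncard (linSet K L (U.prod U)) : ℝ) ≤
      ((q : ℝ) ^ k - 1) * ((q : ℝ) ^ k + 1) / ((q : ℝ) ^ e - 1)
        - ((q : ℝ) + 1) * ((q : ℝ) ^ k - (q : ℝ) ^ e) / ((q : ℝ) ^ e - 1) := by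
  classical
  have hq2 : 2 ≤ q := hq.two_le
  set W : Submodule K (L × L) := U.prod U with hW
  -- dispose of the degenerate case k = 0
  rcases Nat.eq_zero_or_pos k with hk0 | hkpos
  · subst hk0
    have hU : U = ⊥ := Submodule.finrank_eq_zero.mp hUk
    have hempty : linSet K L W = (∅ : Set (Submodule L (L × L))) := by
      ext P
      simp only [linSet, Set.mem_setOf_eq, Set.mem_empty_iff_false, iff_false]
      rintro ⟨w, hwW, hw0, -⟩
      apply hw0
      rw [hW, hU] at hwW
      rcases w with ⟨w1, w2⟩
      rw [Submodule.mem_prod] at hwW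
      simp only [Submodule.mem_bot] at hwW
      simp [hwW.1, hwW.2, Prod.ext_iff]
    have he0 : e = 0 := by
      rw [he, hempty]
      simp [Nat.sInf_eq_zero]
    rw [hempty, he0]
    simp
  -- main case: k ≥ 1
  -- the fibering map
  set f : L × L → Submodule L (L × L) := fun v => Submodule.span L {v} with hf
  -- the set of nonzero vectors of W as a finset
  set s : Finset (L × L) := ((W : Set (L × L)) \ {0}).toFinite.toFinset with hs
  have hmem_s : ∀ v : L × L, v ∈ s ↔ v ∈ W ∧ v ≠ 0 := by
    intro v
    rw [hs, Set.Finite.mem_toFinset]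
    simp [Set.mem_diff]
  -- cardinality of s
  have hcardU : Nat.card ↥U = q ^ k := by
    rw [card_submodule' U, hK, hUk]
  have hcardW : Nat.card ↥W = q ^ (2 * k) := by
    have eqv : ↥W ≃ (↥U × ↥U) :=
      { toFun := fun x => (⟨x.1.1, (Submodule.mem_prod.mp x.2).1⟩,
          ⟨x.1.2, (Submodule.mem_prod.mp x.2).2⟩)
        invFun := fun p => ⟨(p.1.1, p.2.1), Submodule.mem_prod.mpr ⟨p.1.2, p.2.2⟩⟩
        left_inv := fun x => rfl
        right_inv := fun p => rfl }
    rw [Nat.card_congr eqv, Nat.card_prod, hcardU, two_mul, pow_add]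
  have hscard : s.card = q ^ (2 * k) - 1 := by
    rw [hs, ← Set.ncard_eq_toFinset_card _]
    have h0 : (0 : L × L) ∈ (W : Set (L × L)) := W.zero_mem
    rw [Set.ncard_diff_singleton_of_mem h0, ← Nat.card_coe_set_eq]
    have hcoe : Nat.card ↥(W : Set (L × L)) = Nat.card ↥W := rfl
    rw [hcoe, hcardW]
  -- the image finset, i.e. the linear set
  set t : Finset (Submodule L (L × L)) := s.image f with ht
  have hts : (t : Set (Submodule L (L × L))) = linSet K L W := by
    ext P
    simp only [ht, Finset.coe_image, Set.mem_image, Finset.mem_coe, linSet, Set.mem_setOf_eq]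
    constructor
    · rintro ⟨v, hv, rfl⟩
      rw [hmem_s] at hv
      exact ⟨v, hv.1, hv.2, rfl⟩
    · rintro ⟨w, h1, h2, rfl⟩
      exact ⟨w, (hmem_s w).mpr ⟨h1, h2⟩, rfl⟩
  have hN : Set.ncard (linSet K L W) = t.card := by
    rw [← hts, Set.ncard_coe_finset]
  -- fiber cardinalities
  have hfiber : ∀ P ∈ t, (s.filter (fun v => f v = P)).card = q ^ (wt K L W P) - 1 := by
    intro P hP
    have hPlin : P ∈ linSet K L W := by rw [← hts]; exact_mod_cast hP
    obtain ⟨w, hwW, hw0, hPw⟩ := hPlin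
    have hrankP : Module.finrank L ↥P = 1 := by
      rw [hPw]; exact finrank_span_singleton hw0
    set V : Submodule K (L × L) := W ⊓ P.restrictScalars K with hV
    have hset : s.filter (fun v => f v = P) = ((V : Set (L × L)) \ {0}).toFinite.toFinset := by
      ext v
      rw [Finset.mem_filter, hmem_s, Set.Finite.mem_toFinset]
      simp only [Set.mem_diff, SetLike.mem_coe, hV, Submodule.mem_inf,
        Submodule.restrictScalars_mem, Set.mem_singleton_iff]
      constructor
      · rintro ⟨⟨h1, h2⟩, h3⟩
        refine ⟨⟨h1, ?_⟩, h2⟩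
        rw [← h3]
        exact Submodule.mem_span_singleton_self v
      · rintro ⟨⟨h1, h2⟩, h3⟩
        refine ⟨⟨h1, h3⟩, ?_⟩
        apply Submodule.eq_of_le_of_finrank_eq
        · rw [Submodule.span_le, Set.singleton_subset_iff]
          exact h2
        · rw [hrankP, finrank_span_singleton h3]
      
    rw [hset, ← Set.ncard_eq_toFinset_card _]
    have h0 : (0 : L × L) ∈ (V : Set (L × L)) := V.zero_mem
    rw [Set.ncard_diff_singleton_of_mem h0, ← Nat.card_coe_set_eq]
    have hcoe : Nat.card ↥(V : Set (L × L)) = Nat.card ↥V := rfl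
    rw [hcoe, card_submodule V, hK]
    rfl
  -- total count
  have hcount : q ^ (2 * k) - 1 = ∑ P ∈ t, (q ^ (wt K L W P) - 1) := by
    rw [← hscard]
    rw [Finset.card_eq_sum_card_fiberwise (fun x hx => Finset.mem_image_of_mem f hx)]
    exact Finset.sum_congr rfl hfiber
  -- a nonzero element of U
  have hUbot : U ≠ ⊥ := by
    intro hbot
    rw [hbot, finrank_bot] at hUk
    omega
  obtain ⟨u, huU, hu0⟩ := (Submodule.ne_bot_iff U).mp hUbot
  -- the special points
  set Pinf : Submodule L (L × L) := Submodule.span L {((0 : L), (1 : L))} with hPinf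
  set ik : K → Submodule L (L × L) :=
    fun a => Submodule.span L {((1 : L), algebraMap K L a)} with hik
  have hPinf_t : Pinf ∈ t := by
    rw [ht, Finset.mem_image]
    refine ⟨((0 : L), u), (hmem_s _).mpr ⟨Submodule.mem_prod.mpr ⟨U.zero_mem, huU⟩,
      by simp [Prod.ext_iff, hu0]⟩, ?_⟩
    show Submodule.span L {((0 : L), u)} = Pinf
    have hequ : ((0 : L), u) = u • ((0 : L), (1 : L)) := by simp
    rw [hPinf, hequ]
    exact Submodule.span_singleton_smul_eq (isUnit_iff_ne_zero.mpr hu0) _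
  have hik_t : ∀ a : K, ik a ∈ t := by
    intro a
    rw [ht, Finset.mem_image]
    have hcu : algebraMap K L a * u ∈ U := by
      rw [← Algebra.smul_def]; exact U.smul_mem a huU
    refine ⟨(u, algebraMap K L a * u), (hmem_s _).mpr ⟨Submodule.mem_prod.mpr ⟨huU, hcu⟩,
      by simp [Prod.ext_iff, hu0]⟩, ?_⟩
    show Submodule.span L {(u, algebraMap K L a * u)} = ik a
    have hequ : (u, algebraMap K L a * u) = u • ((1 : L), algebraMap K L a) := by
      simp [Prod.ext_iff, mul_comm]
    rw [hik, hequ]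
    exact Submodule.span_singleton_smul_eq (isUnit_iff_ne_zero.mpr hu0) _
  -- weights of the special points are at least k
  have hwt_ge : ∀ (P : Submodule L (L × L)) (φ : ↥U →ₗ[K] (L × L)),
      Function.Injective φ → (∀ x : ↥U, φ x ∈ W ⊓ P.restrictScalars K) →
      k ≤ wt K L W P := by
    intro P φ hinj hmem
    have hinj' : Function.Injective (φ.codRestrict (W ⊓ P.restrictScalars K) hmem) := by
      intro x y hxy
      exact hinj (congrArg Subtype.val hxy)
    have := LinearMap.finrank_le_finrank_of_injective hinj'
    rw [hUk] at this
    exact this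
  have hwinf : k ≤ wt K L W Pinf := by
    refine hwt_ge Pinf ((0 : ↥U →ₗ[K] L).prod U.subtype) ?_ ?_
    · intro x y hxy
      exact Subtype.ext (congrArg Prod.snd hxy)
    · intro x
      refine Submodule.mem_inf.mpr ⟨Submodule.mem_prod.mpr ⟨U.zero_mem, x.2⟩, ?_⟩
      show ((0 : L), (x : L)) ∈ Pinf
      rw [hPinf, Submodule.mem_span_singleton]
      exact ⟨(x : L), by simp⟩
  have hwik : ∀ a : K, k ≤ wt K L W (ik a) := by
    intro a
    refine hwt_ge (ik a) (U.subtype.prod (algebraMap K L a • U.subtype)) ?_ ?_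
    · intro x y hxy
      exact Subtype.ext (congrArg Prod.fst hxy)
    · intro x
      have hval : (U.subtype.prod (algebraMap K L a • U.subtype)) x
          = ((x : L), algebraMap K L a * (x : L)) := by
        simp [LinearMap.prod_apply, smul_eq_mul, Algebra.smul_def]
      rw [hval]
      have hcu : algebraMap K L a * (x : L) ∈ U := by
        rw [← Algebra.smul_def]; exact U.smul_mem a x.2
      refine Submodule.mem_inf.mpr ⟨Submodule.mem_prod.mpr ⟨x.2, hcu⟩, ?_⟩
      show ((x : L), algebraMap K L a * (x : L)) ∈ ik a
      rw [hik, Submodule.mem_span_singleton]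
      exact ⟨(x : L), by simp [Prod.ext_iff, mul_comm]⟩
  -- all weights are at least e, and e ≥ 1
  have hSdef : ∀ P ∈ t, wt K L W P ∈ {i : ℕ | ∃ P ∈ linSet K L W, wt K L W P = i} :=
    fun P hP => ⟨P, by rw [← hts]; exact_mod_cast hP, rfl⟩
  have hwe : ∀ P ∈ t, e ≤ wt K L W P := fun P hP => he ▸ Nat.sInf_le (hSdef P hP)
  have hepos : 1 ≤ e := by
    have hne : {i : ℕ | ∃ P ∈ linSet K L W, wt K L W P = i}.Nonempty :=
      ⟨wt K L W Pinf, hSdef Pinf hPinf_t⟩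
    have hmem := Nat.sInf_mem hne
    rw [← he] at hmem
    obtain ⟨P, hPlin, hPe⟩ := hmem
    obtain ⟨w, hwW, hw0, hPw⟩ := hPlin
    have hwP : w ∈ P.restrictScalars K := by
      rw [Submodule.restrictScalars_mem, hPw]
      exact Submodule.mem_span_singleton_self w
    have hnt : Nontrivial ↥(W ⊓ P.restrictScalars K) :=
      ⟨⟨⟨w, Submodule.mem_inf.mpr ⟨hwW, hwP⟩⟩, 0,
        fun h => hw0 (by simpa using congrArg Subtype.val h)⟩⟩
    have hpos : 0 < wt K L W P := Module.finrank_pos_iff.mpr hnt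
    omega
  -- the q+1 special points are pairwise distinct
  have hik_inj : Function.Injective ik := by
    intro a b hab
    have h1 : ((1 : L), algebraMap K L a) ∈ ik b := by
      rw [← hab, hik]
      exact Submodule.mem_span_singleton_self _
    rw [hik, Submodule.mem_span_singleton] at h1
    obtain ⟨c, hc⟩ := h1
    rw [Prod.smul_mk, Prod.mk.injEq, smul_eq_mul, smul_eq_mul] at hc
    obtain ⟨hc1, hc2⟩ := hc
    rw [mul_one] at hc1
    rw [hc1, one_mul] at hc2
    exact ((algebraMap K L).injective hc2).symm
  have hPinf_ne : ∀ a : K, Pinf ≠ ik a := by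
    intro a hEq
    have h1 : ((0 : L), (1 : L)) ∈ ik a := by
      rw [← hEq, hPinf]
      exact Submodule.mem_span_singleton_self _
    rw [hik, Submodule.mem_span_singleton] at h1
    obtain ⟨c, hc⟩ := h1
    rw [Prod.smul_mk, Prod.mk.injEq, smul_eq_mul, smul_eq_mul] at hc
    obtain ⟨hc1, hc2⟩ := hc
    rw [mul_one] at hc1
    rw [hc1, zero_mul] at hc2
    exact zero_ne_one hc2
  set T : Finset (Submodule L (L × L)) := insert Pinf (Finset.image ik Finset.univ) with hT
  have hnotmem : Pinf ∉ Finset.image ik Finset.univ := by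
    simp only [Finset.mem_image, Finset.mem_univ, true_and]
    rintro ⟨a, ha⟩
    exact hPinf_ne a ha.symm
  have hTcard : T.card = q + 1 := by
    rw [hT, Finset.card_insert_of_notMem hnotmem,
      Finset.card_image_of_injective _ hik_inj, Finset.card_univ, hK]
  have hTt : T ⊆ t := by
    rw [hT]
    intro P hP
    rcases Finset.mem_insert.mp hP with rfl | hP
    · exact hPinf_t
    · obtain ⟨a, -, rfl⟩ := Finset.mem_image.mp hP
      exact hik_t a
  have hwT : ∀ P ∈ T, k ≤ wt K L W P := by
    intro P hP
    rcases Finset.mem_insert.mp hP with rfl | hP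
    · exact hwinf
    · obtain ⟨a, -, rfl⟩ := Finset.mem_image.mp hP
      exact hwik a
  -- pass to the reals
  have hq1R : (1 : ℝ) ≤ (q : ℝ) := by
    have : (1 : ℕ) ≤ q := by omega
    exact_mod_cast this
  have hsum_real : (q : ℝ) ^ (2 * k) - 1 = ∑ P ∈ t, ((q : ℝ) ^ (wt K L W P) - 1) := by
    have h := congrArg (fun m : ℕ => (m : ℝ)) hcount
    simp only [Nat.cast_sum] at h
    rw [Nat.cast_sub (Nat.one_le_pow _ _ (by omega))] at h
    push_cast at h
    rw [h]
    refine Finset.sum_congr rfl fun P hP => ?_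
    rw [Nat.cast_sub (Nat.one_le_pow _ _ (by omega))]
    push_cast
    ring
  have hsdiff : ∑ P ∈ t \ T, ((q : ℝ) ^ (wt K L W P) - 1)
      + ∑ P ∈ T, ((q : ℝ) ^ (wt K L W P) - 1)
      = ∑ P ∈ t, ((q : ℝ) ^ (wt K L W P) - 1) := Finset.sum_sdiff hTt
  have hTlb : (T.card : ℝ) * ((q : ℝ) ^ k - 1) ≤ ∑ P ∈ T, ((q : ℝ) ^ (wt K L W P) - 1) := by
    have h := Finset.card_nsmul_le_sum T (fun P => (q : ℝ) ^ (wt K L W P) - 1) ((q : ℝ) ^ k - 1) (fun P hP => by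
      have hk := hwT P hP
      have hple : (q : ℝ) ^ k ≤ (q : ℝ) ^ (wt K L W P) := pow_le_pow_right₀ hq1R hk
      linarith)
    rw [nsmul_eq_mul] at h; exact h
  have hRlb : ((t \ T).card : ℝ) * ((q : ℝ) ^ e - 1)
      ≤ ∑ P ∈ t \ T, ((q : ℝ) ^ (wt K L W P) - 1) := by
    have h := Finset.card_nsmul_le_sum (t \ T) (fun P => (q : ℝ) ^ (wt K L W P) - 1) ((q : ℝ) ^ e - 1) (fun P hP => by
      have hk := hwe P (Finset.mem_sdiff.mp hP).1
      have hple : (q : ℝ) ^ e ≤ (q : ℝ) ^ (wt K L W P) := pow_le_pow_right₀ hq1R hk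
      linarith)
    rw [nsmul_eq_mul] at h; exact h
  -- final arithmetic
  have hNT : T.card ≤ t.card := Finset.card_le_card hTt
  have hcards : ((t \ T).card : ℝ) = (t.card : ℝ) - ((q : ℝ) + 1) := by
    rw [Finset.card_sdiff_of_subset hTt, Nat.cast_sub hNT, hTcard]
    push_cast
    ring
  have hbig : ((t.card : ℝ) - ((q : ℝ) + 1)) * ((q : ℝ) ^ e - 1)
      + ((q : ℝ) + 1) * ((q : ℝ) ^ k - 1) ≤ (q : ℝ) ^ (2 * k) - 1 := by
    rw [hsum_real, ← hsdiff]
    have h1 := hTlb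
    rw [hTcard] at h1
    push_cast at h1
    have h2 := hRlb
    rw [hcards] at h2
    linarith
  have hdpos : (0 : ℝ) < (q : ℝ) ^ e - 1 := by
    have h2R : (2 : ℝ) ≤ (q : ℝ) := by exact_mod_cast hq2
    have : (1 : ℝ) < (q : ℝ) ^ e := one_lt_pow₀ (by linarith) (by omega)
    linarith
  have hq2k : (q : ℝ) ^ (2 * k) = (q : ℝ) ^ k * (q : ℝ) ^ k := by
    rw [two_mul, pow_add]
  rw [hN, div_sub_div_same, le_div_iff₀ hdpos]
  nlinarith [hbig, hq2k]
end

section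
/- Let q be a prime power and U a k-dimensional 𝔽_q-subspace of 𝔽_{q^n} such that the minimum distance of Orb(U) satisfies d(Orb(U)) = 2(k−ℓ) > 2. Then k ≤ (n+ℓ)/2. Moreover, if Orb(U) is a full-length orbit code, then k < (n+ℓ)/2; in particular, in that case: (a) if ℓ = 1 then k ≤ n/2, and (b) if ℓ = 2 and n is odd then k ≤ (n+1)/2. -/
/-!
If `αU ≠ U`, the minimum distance forces `dim (U ∩ αU) ≤ ℓ`, while `dim (U + αU) ≤ n` gives
`2k ≤ n + dim (U ∩ αU)`; hence `2k ≤ n + ℓ`. If `2k = n + ℓ` for a full-length orbit, every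
`α ∉ 𝔽_q^*` has `dim (U ∩ αU) = ℓ` exactly. Sorting the pairs `(u, v)` of nonzero vectors of `U`
by the ratio `v / u` gives `∑_{α ≠ 0} (q ^ dim (U ∩ αU) - 1) = (q^k - 1)^2`, that is
`(q - 1)(q^k - 1) + (q^n - q)(q^ℓ - 1) = (q^k - 1)^2`. This simplifies to
`(q + 1) q^k = q^n + q^(ℓ+1)`, impossible since `n = 2k - ℓ ≥ k + 2`.
-/

noncomputable def shiftSub (K L : Type*) [Field K] [Field L] [Algebra K L]
    (α : L) (U : Submodule K L) : Submodule K L :=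
  U.map (LinearMap.mulLeft K α)

noncomputable def orbCode (K L : Type*) [Field K] [Field L] [Algebra K L]
    (U : Submodule K L) : Set (Submodule K L) :=
  {V | ∃ α : L, α ≠ 0 ∧ V = shiftSub K L α U}

noncomputable def subDist (K L : Type*) [Field K] [Field L] [Algebra K L]
    (k : ℕ) (V W : Submodule K L) : ℕ :=
  2 * (k - Module.finrank K ↥(V ⊓ W))

noncomputable def minDist (K L : Type*) [Field K] [Field L] [Algebra K L]
    (k : ℕ) (C : Set (Submodule K L)) : ℕ :=
  sInf {d : ℕ | ∃ V ∈ C, ∃ W ∈ C, V ≠ W ∧ d = subDist K L k V W}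

def stabSet (K L : Type*) [Field K] [Field L] [Algebra K L] (U : Submodule K L) : Set L :=
  {α : L | α ≠ 0 ∧ shiftSub K L α U = U}

def baseUnits (K L : Type*) [Field K] [Field L] [Algebra K L] : Set L :=
  {α : L | α ≠ 0 ∧ ∃ c : K, algebraMap K L c = α}

open Finset Module
open scoped Pointwise

namespace Finset
variable {G : Type*} [Group G] [Fintype G] [DecidableEq G]

lemma sum_convolution (A B : Finset G) : ∑ x, A.convolution B x = #A * #B := by
  rw [← card_product]
  exact (card_eq_sum_card_fiberwise (f := fun ab : G × G ↦ ab.1 * ab.2) fun _ _ ↦ mem_univ _).symm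

lemma sum_card_inter_smul (S : Finset G) : ∑ g : G, #(S ∩ g • S) = #S ^ 2 := by
  simp_rw [card_inter_smul, sum_convolution, card_inv, sq]

end Finset

section ShiftSub
variable {K L : Type*} [Field K] [Field L] [Algebra K L]

lemma shiftSub_one (U : Submodule K L) : shiftSub K L 1 U = U := by
  simp [shiftSub, LinearMap.mulLeft_one]

lemma mem_shiftSub_iff {α : L} (hα : α ≠ 0) {U : Submodule K L} {x : L} :
    x ∈ shiftSub K L α U ↔ α⁻¹ * x ∈ U := by
  simp only [shiftSub, Submodule.mem_map, LinearMap.mulLeft_apply]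
  refine ⟨?_, fun h ↦ ⟨α⁻¹ * x, h, mul_inv_cancel_left₀ hα x⟩⟩
  rintro ⟨u, hu, rfl⟩
  rwa [inv_mul_cancel_left₀ hα]

lemma finrank_shiftSub {α : L} (hα : α ≠ 0) (U : Submodule K L) :
    finrank K (shiftSub K L α U) = finrank K U :=
  (LinearEquiv.finrank_eq
    (Submodule.equivMapOfInjective (LinearMap.mulLeft K α) (mul_right_injective₀ hα) U)).symm

lemma two_mul_finrank_le_finrank_add_finrank_inf_shiftSub [FiniteDimensional K L]
    {α : L} (hα : α ≠ 0) (U : Submodule K L) :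
    2 * finrank K U ≤ finrank K L + finrank K ↥(U ⊓ shiftSub K L α U) := by
  have h := Submodule.finrank_sup_add_finrank_inf_eq U (shiftSub K L α U)
  rw [finrank_shiftSub hα] at h
  have := Submodule.finrank_le (U ⊔ shiftSub K L α U)
  omega

lemma minDist_orbCode_le_subDist (k : ℕ) {α : L} (hα : α ≠ 0) {U : Submodule K L}
    (hne : shiftSub K L α U ≠ U) :
    minDist K L k (orbCode K L U) ≤ subDist K L k U (shiftSub K L α U) :=
  Nat.sInf_le ⟨U, ⟨1, one_ne_zero, (shiftSub_one U).symm⟩, _, ⟨α, hα, rfl⟩, hne.symm, rfl⟩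

lemma exists_shiftSub_ne_of_minDist_pos {k : ℕ} {U : Submodule K L}
    (h : 0 < minDist K L k (orbCode K L U)) : ∃ α : L, α ≠ 0 ∧ shiftSub K L α U ≠ U := by
  by_contra! hstab
  refine h.ne' (Nat.sInf_eq_zero.mpr (Or.inr (Set.eq_empty_iff_forall_notMem.mpr ?_)))
  rintro d ⟨_, ⟨a, ha, rfl⟩, _, ⟨b, hb, rfl⟩, hne, -⟩
  exact hne (by rw [hstab a ha, hstab b hb])

end ShiftSub

section Counting
variable {K L : Type*} [Field K] [Field L] [Algebra K L] [Fintype L]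

open scoped Classical in
noncomputable def Submodule.unitFinset (W : Submodule K L) : Finset Lˣ :=
  {u | (u : L) ∈ W}

@[simp]
lemma Submodule.mem_unitFinset {W : Submodule K L} {u : Lˣ} : u ∈ W.unitFinset ↔ (u : L) ∈ W := by
  simp [Submodule.unitFinset]

lemma Submodule.card_unitFinset [Fintype K] (W : Submodule K L) :
    #W.unitFinset = Fintype.card K ^ finrank K W - 1 := by
  classical
  have hval : W.unitFinset.map ⟨(↑), Units.val_injective⟩ = ({x | x ∈ W} : Finset L).erase 0 := by
    ext x
    simp only [Finset.mem_map, Submodule.mem_unitFinset, Function.Embedding.coeFn_mk, mem_erase,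
      mem_filter, mem_univ, true_and]
    refine ⟨?_, fun ⟨hx0, hxW⟩ ↦ ⟨Units.mk0 x hx0, hxW, rfl⟩⟩
    rintro ⟨u, hu, rfl⟩
    exact ⟨u.ne_zero, hu⟩
  rw [← card_map, hval, card_erase_of_mem (by simp [W.zero_mem]), ← Fintype.card_subtype,
    Module.card_eq_pow_finrank (K := K) (V := W)]

variable [DecidableEq L]

lemma unitFinset_inter_smul (U : Submodule K L) (g : Lˣ) :
    U.unitFinset ∩ g • U.unitFinset = (U ⊓ shiftSub K L g U).unitFinset := by
  ext u
  rw [mem_inter, ← inv_smul_mem_iff]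
  simp [mem_shiftSub_iff g.ne_zero]

lemma sum_card_inf_shiftSub [Fintype K] (U : Submodule K L) :
    ∑ g : Lˣ, (Fintype.card K ^ finrank K ↥(U ⊓ shiftSub K L g U) - 1) =
      (Fintype.card K ^ finrank K U - 1) ^ 2 := by
  simp_rw [← Submodule.card_unitFinset, ← unitFinset_inter_smul, sum_card_inter_smul]

end Counting

section FullLength
variable {K L : Type*} [Field K] [Field L] [Algebra K L] [Fintype K] [Fintype L] [DecidableEq L]

lemma card_filter_shiftSub_eq_self {U : Submodule K L} (hfull : stabSet K L U = baseUnits K L) :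
    #{g : Lˣ | shiftSub K L g U = U} = Fintype.card K - 1 := by
  classical
  have hinj : Function.Injective (Units.map (algebraMap K L : K →* L)) :=
    Units.map_injective (algebraMap K L).injective
  have himage : ({g : Lˣ | shiftSub K L g U = U} : Finset Lˣ) =
      univ.image (Units.map (algebraMap K L : K →* L)) := by
    ext g
    have hg : shiftSub K L g U = U ↔ (g : L) ∈ baseUnits K L := by
      rw [← hfull]; exact (and_iff_right g.ne_zero).symm
    simp only [mem_filter, mem_univ, true_and, mem_image, hg, baseUnits, Set.mem_ofPred_eq,
      g.ne_zero, ne_eq, not_false_eq_true]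
    refine ⟨fun ⟨c, hc⟩ ↦ ⟨Units.mk0 c fun h ↦ g.ne_zero (by simp [← hc, h]), Units.ext hc⟩, ?_⟩
    rintro ⟨c, rfl⟩
    exact ⟨c, rfl⟩
  rw [himage, card_image_of_injective _ hinj, card_univ, Fintype.card_units]

lemma sub_one_mul_add_eq_sq_of_finrank_inf_shiftSub_eq {U : Submodule K L} {ℓ : ℕ}
    (hfull : stabSet K L U = baseUnits K L)
    (hℓ : ∀ g : Lˣ, shiftSub K L g U ≠ U → finrank K ↥(U ⊓ shiftSub K L g U) = ℓ) :
    (Fintype.card K - 1) * (Fintype.card K ^ finrank K U - 1) +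
        (Fintype.card K ^ finrank K L - Fintype.card K) * (Fintype.card K ^ ℓ - 1) =
      (Fintype.card K ^ finrank K U - 1) ^ 2 := by
  have hq : 1 ≤ Fintype.card K := Fintype.card_pos
  have hqn : Fintype.card K ≤ Fintype.card K ^ finrank K L :=
    Nat.le_self_pow finrank_pos.ne' _
  have hcard : #{g : Lˣ | ¬shiftSub K L g U = U} =
      Fintype.card K ^ finrank K L - Fintype.card K := by
    have := card_filter_add_card_filter_not (s := univ) (fun g : Lˣ ↦ shiftSub K L g U = U)
    rw [card_filter_shiftSub_eq_self hfull, card_univ, Fintype.card_units,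
      Module.card_eq_pow_finrank (K := K) (V := L)] at this
    omega
  rw [← sum_card_inf_shiftSub,
    ← sum_filter_add_sum_filter_not univ (fun g : Lˣ ↦ shiftSub K L g U = U),
    sum_const_nat fun g hg ↦ by rw [(mem_filter.mp hg).2, inf_idem],
    sum_const_nat fun g hg ↦ by rw [hℓ g (mem_filter.mp hg).2],
    card_filter_shiftSub_eq_self hfull, hcard]

end FullLength

lemma sub_one_mul_add_ne_sq {q n k ℓ : ℕ} (hq : 2 ≤ q) (hk : ℓ + 2 ≤ k) (hn : n + ℓ = 2 * k) :
    (q - 1) * (q ^ k - 1) + (q ^ n - q) * (q ^ ℓ - 1) ≠ (q ^ k - 1) ^ 2 := by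
  intro h
  have hqn : q ≤ q ^ n := Nat.le_self_pow (by omega) q
  zify [Nat.one_le_pow k q (by omega), Nat.one_le_pow ℓ q (by omega), (by omega : 1 ≤ q), hqn] at h
  have hnℓ : (q : ℤ) ^ n * q ^ ℓ = ((q : ℤ) ^ k) ^ 2 := by
    rw [← pow_add, ← pow_mul, hn, mul_comm]
  have hkey : ((q : ℤ) + 1) * q ^ k = q ^ n + q * q ^ ℓ := by linear_combination h - hnℓ
  have hq' : (2 : ℤ) ≤ q := by exact_mod_cast hq
  have hqk : (0 : ℤ) < q ^ k := by positivity
  have hlt : ((q : ℤ) + 1) * q ^ k < q ^ 2 * q ^ k :=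
    mul_lt_mul_of_pos_right (by nlinarith) hqk
  have hle : (q : ℤ) ^ 2 * q ^ k ≤ q ^ n := by
    rw [← pow_add]; exact pow_le_pow_right₀ (by omega) (by omega)
  have hqℓ : (0 : ℤ) < q * q ^ ℓ := by positivity
  linarith

theorem statement_1_general (q n k ℓ : ℕ)
    (K L : Type*) [Field K] [Field L] [Algebra K L] [Fintype K] [Fintype L]
    (hK : Fintype.card K = q) (hL : Fintype.card L = q ^ n)
    (U : Submodule K L) (hUk : Module.finrank K ↥U = k)
    (hd : minDist K L k (orbCode K L U) = 2 * (k - ℓ))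
    (hd2 : 2 < minDist K L k (orbCode K L U)) :
    2 * k ≤ n + ℓ ∧
      (stabSet K L U = baseUnits K L →
        2 * k < n + ℓ ∧ (ℓ = 1 → 2 * k ≤ n) ∧ (ℓ = 2 → Odd n → 2 * k ≤ n + 1)) := by
  classical
  have hq : 2 ≤ q := hK ▸ Fintype.one_lt_card
  have hn : finrank K L = n :=
    Nat.pow_right_injective hq <| show q ^ _ = q ^ n by
      rw [← hL, ← hK, Module.card_eq_pow_finrank (K := K) (V := L)]
  have hk : ℓ + 2 ≤ k := by omega
  have hcap {α : L} (hα : α ≠ 0) (hne : shiftSub K L α U ≠ U) :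
      finrank K ↥(U ⊓ shiftSub K L α U) ≤ ℓ := by
    have := minDist_orbCode_le_subDist k hα hne
    rw [hd, subDist] at this
    omega
  have hcup {α : L} (hα : α ≠ 0) : 2 * k ≤ n + finrank K ↥(U ⊓ shiftSub K L α U) :=
    hn ▸ hUk ▸ two_mul_finrank_le_finrank_add_finrank_inf_shiftSub hα U
  obtain ⟨α, hα, hne⟩ := exists_shiftSub_ne_of_minDist_pos
    (by omega : 0 < minDist K L k (orbCode K L U))
  have hle : 2 * k ≤ n + ℓ := (hcup hα).trans (by have := hcap hα hne; omega)
  refine ⟨hle, fun hfull ↦ ?_⟩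
  suffices hlt : 2 * k < n + ℓ from ⟨hlt, fun _ ↦ by omega, fun _ _ ↦ by omega⟩
  by_contra! hge
  have hconst (g : Lˣ) (hg : shiftSub K L g U ≠ U) : finrank K ↥(U ⊓ shiftSub K L g U) = ℓ := by
    have := hcap g.ne_zero hg
    have := hcup g.ne_zero
    omega
  refine sub_one_mul_add_ne_sq (n := n) hq hk (by omega) ?_
  simpa only [hK, hn, hUk] using sub_one_mul_add_eq_sq_of_finrank_inf_shiftSub_eq hfull hconst

theorem statement_1 (q n k ℓ : ℕ) (hq : IsPrimePow q)
    (K L : Type*) [Field K] [Field L] [Algebra K L] [Fintype K] [Fintype L]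
    (hK : Fintype.card K = q) (hL : Fintype.card L = q ^ n)
    (U : Submodule K L) (hUk : Module.finrank K ↥U = k)
    (hd : minDist K L k (orbCode K L U) = 2 * (k - ℓ))
    (hd2 : 2 < minDist K L k (orbCode K L U)) :
    2 * k ≤ n + ℓ ∧
      (stabSet K L U = baseUnits K L →
        2 * k < n + ℓ ∧ (ℓ = 1 → 2 * k ≤ n) ∧ (ℓ = 2 → Odd n → 2 * k ≤ n + 1)) :=
  statement_1_general q n k ℓ K L hK hL U hUk hd hd2
end

section
/- Let q be a prime power, k > 2, n = 2k, s ∈ {1,…,k−1} with gcd(s,k) = 1, and γ ∈ 𝔽_{q^n} with 𝔽_{q^n} = 𝔽_{q^k}(γ). Set U = U_{s,γ}, A = Tr_{q^{2k}/q^k}(γ), B = −N_{q^{2k}/q^k}(γ). Fix α ∈ 𝔽_{q^{2k}}^* and write α = α_0 + α_1γ with α_0,α_1 ∈ 𝔽_{q^k}, and let f_α be the q^s-polynomial f_α(X) = −α_1 X + (α_0^{q^s} − α_0 − α_1 A) X^{q^s} + α_1^{q^s} B^{q^s} X^{q^{2s}}. Then for every x ∈ 𝔽_{q^k}: α(x +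 x^{q^s}γ) ∈ U ∩ αU if and only if f_α(x) = 0. Consequently dim_{𝔽_q}(U ∩ αU) = dim_{𝔽_q}(ker of the 𝔽_q-linear map 𝔽_{q^k} → 𝔽_{q^k}, x ↦ f_α(x)), and this map is identically zero if and only if α ∈ 𝔽_q. -/
theorem statement_10 (q k s : ℕ) (hq : IsPrimePow q) (hk : 2 < k)
    (hs1 : 1 ≤ s) (hsk : s ≤ k - 1) (hgcd : Nat.gcd s k = 1)
    (K L : Type*) [Field K] [Field L] [Algebra K L] [Fintype K] [Fintype L]
    (hK : Fintype.card K = q) (hL : Fintype.card L = q ^ (2 * k))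
    (F : Subfield L) (hF : Nat.card F = q ^ k)
    (γ : L) (hγ : Subfield.closure ((F : Set L) ∪ {γ}) = ⊤)
    (U : Submodule K L)
    (hU : (U : Set L) = {x : L | ∃ u ∈ F, x = u + u ^ q ^ s * γ})
    (A B : L) (hA : A = γ + γ ^ q ^ k) (hB : B = -(γ * γ ^ q ^ k))
    (α : L) (hα : α ≠ 0)
    (α₀ α₁ : L) (hα₀ : α₀ ∈ F) (hα₁ : α₁ ∈ F) (hαeq : α = α₀ + α₁ * γ)
    (f : L → L)
    (hf : f = fun x => -α₁ * x + (α₀ ^ q ^ s - α₀ - α₁ * A) * x ^ q ^ s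
        + α₁ ^ q ^ s * B ^ q ^ s * x ^ q ^ (2 * s))
    (Kker : Submodule K L)
    (hker : (Kker : Set L) = {x : L | x ∈ F ∧ f x = 0}) :
    (∀ x ∈ F, (α * (x + x ^ q ^ s * γ) ∈ U ⊓ shiftSub K L α U ↔ f x = 0)) ∧
    Module.finrank K ↥(U ⊓ shiftSub K L α U) = Module.finrank K ↥Kker ∧
    ((∀ x ∈ F, f x = 0) ↔ ∃ c : K, algebraMap K L c = α) := by
  classical
  have hq2 : 2 ≤ q := hq.two_le
  have hsk' : s < k := by omega
  -- characteristic facts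
  obtain ⟨p, e, hp, he, hpe⟩ := hq
  haveI : CharP L (ringChar L) := ringChar.charP L
  obtain ⟨m, hrp, hcardL⟩ := FiniteField.card L (ringChar L)
  have hrep : ringChar L = p := by
    have h1 : (ringChar L) ^ (m : ℕ) = p ^ (e * (2 * k)) := by
      rw [← hcardL, hL, ← hpe, ← pow_mul]
    have hpd : p ∣ (ringChar L) ^ (m : ℕ) := by
      rw [h1]; exact dvd_pow_self p (by positivity)
    have hpr : p ∣ ringChar L := hp.nat_prime.dvd_of_dvd_pow hpd
    exact ((Nat.prime_dvd_prime_iff_eq hp.nat_prime hrp).mp hpr).symm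
  have hqr : q = ringChar L ^ e := by rw [hrep]; exact hpe.symm
  haveI : Fact (Nat.Prime (ringChar L)) := ⟨hrp⟩
  have hfrob : ∀ (j : ℕ) (x y : L), (x + y) ^ q ^ j = x ^ q ^ j + y ^ q ^ j := by
    intro j x y
    have hq' : q ^ j = ringChar L ^ (e * j) := by rw [hqr, pow_mul]
    rw [hq']
    exact add_pow_char_pow x y _ _
  have hq0 : ∀ j : ℕ, q ^ j ≠ 0 := fun j => pow_ne_zero j (by omega)
  have hneg : ∀ (j : ℕ) (z : L), (-z) ^ q ^ j = -(z ^ q ^ j) := by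
    intro j z
    have h := hfrob j z (-z)
    rw [add_neg_cancel, zero_pow (hq0 j)] at h
    exact (neg_eq_of_add_eq_zero_right h.symm).symm
  have hsub : ∀ (j : ℕ) (x y : L), (x - y) ^ q ^ j = x ^ q ^ j - y ^ q ^ j := by
    intro j x y
    rw [sub_eq_add_neg, hfrob, hneg, ← sub_eq_add_neg]
  have hiter : ∀ (x : L) (m : ℕ), x ^ q ^ m = x → ∀ t : ℕ, x ^ q ^ (m * t) = x := by
    intro x m hx t
    induction t with
    | zero => simp
    | succ t ih =>
      have h1 : q ^ (m * (t + 1)) = q ^ (m * t) * q ^ m := by rw [Nat.mul_succ, pow_add]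
      rw [h1, pow_mul, ih, hx]
  -- cardinality facts
  have hLpow : ∀ x : L, x ^ q ^ (2 * k) = x := by
    intro x; rw [← hL]; exact FiniteField.pow_card x
  haveI : Fintype ↥F := Fintype.ofFinite _
  have hFcard : Fintype.card ↥F = q ^ k := by rw [← Nat.card_eq_fintype_card]; exact hF
  have hFpow : ∀ x ∈ F, x ^ q ^ k = x := by
    intro x hx
    have h := FiniteField.pow_card (⟨x, hx⟩ : F)
    rw [hFcard] at h
    simpa using congrArg Subtype.val h
  have hKpow : ∀ c : K, c ^ q = c := by
    intro c; rw [← hK]; exact FiniteField.pow_card c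
  -- counting roots
  have count : ∀ N : ℕ, 2 ≤ N → ∀ S : Finset L, (∀ x ∈ S, x ^ N = x) → S.card ≤ N := by
    intro N hN S hS
    set P : Polynomial L := Polynomial.X ^ N - Polynomial.X with hP
    have hP0 : P ≠ 0 := by
      intro h
      have hc : P.coeff N = 0 := by rw [h]; simp
      rw [hP, Polynomial.coeff_sub, Polynomial.coeff_X_pow, Polynomial.coeff_X] at hc
      rw [if_pos rfl, if_neg (by omega : ¬ (1 = N))] at hc
      norm_num at hc
    have hdeg : P.natDegree ≤ N := by
      refine le_trans (Polynomial.natDegree_sub_le _ _) ?_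
      simp [Polynomial.natDegree_X_pow, Polynomial.natDegree_X]; omega
    have hsubr : S ⊆ P.roots.toFinset := by
      intro x hx
      rw [Multiset.mem_toFinset, Polynomial.mem_roots hP0]
      show P.IsRoot x
      simp [hP, Polynomial.IsRoot, hS x hx, sub_eq_zero]
    calc S.card ≤ P.roots.toFinset.card := Finset.card_le_card hsubr
      _ ≤ Multiset.card P.roots := Multiset.toFinset_card_le _
      _ ≤ P.natDegree := Polynomial.card_roots' P
      _ ≤ N := hdeg
  have hq2N : ∀ m : ℕ, 1 ≤ m → 2 ≤ q ^ m := fun m hm =>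
    le_trans hq2 (Nat.le_self_pow (by omega) q)
  have hmemF : ∀ x : L, x ∈ (F : Set L).toFinset ↔ x ∈ F := by
    intro x; rw [Set.mem_toFinset]; rfl
  have hFfin : (F : Set L).toFinset.card = q ^ k := by
    rw [Set.toFinset_card, ← hFcard]
    exact Fintype.card_congr (Equiv.refl _)
  have hnotall : ∀ m : ℕ, 0 < m → m < k → ¬ (∀ y ∈ F, y ^ q ^ m = y) := by
    intro m hm hmk hall
    have h1 := count (q ^ m) (hq2N m hm) (F : Set L).toFinset
      (fun x hx => hall x ((hmemF x).mp hx))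
    rw [hFfin] at h1
    exact absurd h1 (not_le.mpr (Nat.pow_lt_pow_right (by omega) hmk))
  have hFiff : ∀ x : L, x ∈ F ↔ x ^ q ^ k = x := by
    intro x
    refine ⟨hFpow x, fun hx => ?_⟩
    by_contra hxF
    have h1 := count (q ^ k) (hq2N k (by omega)) (insert x (F : Set L).toFinset) ?_
    · rw [Finset.card_insert_of_notMem (by simpa [hmemF] using hxF), hFfin] at h1
      omega
    · intro y hy
      rcases Finset.mem_insert.mp hy with rfl | hy
      · exact hx
      · exact hFpow y ((hmemF y).mp hy)
  have hKiff : ∀ x : L, x ^ q = x ↔ ∃ c : K, algebraMap K L c = x := by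
    intro x
    constructor
    · intro hx
      by_contra hc
      push_neg at hc
      have hcard : (Set.range (algebraMap K L)).toFinset.card = q := by
        rw [Set.toFinset_card, Set.card_range_of_injective (algebraMap K L).injective, hK]
      have h1 := count q hq2 (insert x (Set.range (algebraMap K L)).toFinset) ?_
      · rw [Finset.card_insert_of_notMem (by
          rw [Set.mem_toFinset]
          rintro ⟨c, hc'⟩
          exact hc c hc'), hcard] at h1
        omega
      · intro y hy
        rcases Finset.mem_insert.mp hy with rfl | hy
        · exact hx
        · obtain ⟨c, rfl⟩ := Set.mem_toFinset.mp hy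
          rw [← map_pow, hKpow]
    · rintro ⟨c, rfl⟩; rw [← map_pow, hKpow]
  have hKfix : ∀ (c : K) (j : ℕ), (algebraMap K L c) ^ q ^ j = algebraMap K L c := by
    intro c j
    have h1 : (algebraMap K L c) ^ q ^ 1 = algebraMap K L c := by
      rw [pow_one, ← map_pow, hKpow]
    have h2 := hiter _ 1 h1 j
    rwa [one_mul] at h2
  -- γ ∉ F
  have hγF : γ ∉ F := by
    intro hγmem
    have hle : Subfield.closure ((F : Set L) ∪ {γ}) ≤ F := by
      apply Subfield.closure_le.mpr
      rintro x (hx | rfl)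
      · exact hx
      · exact hγmem
    rw [hγ] at hle
    have hall : ∀ x : L, x ∈ F := fun x => hle trivial
    have h1 : (Finset.univ : Finset L) ⊆ (F : Set L).toFinset :=
      fun x _ => (hmemF x).mpr (hall x)
    have h2 := Finset.card_le_card h1
    rw [Finset.card_univ, hL, hFfin] at h2
    have h3 : q ^ k < q ^ (2 * k) := Nat.pow_lt_pow_right (by omega) (by omega)
    omega
  -- coordinates
  have hcoord0 : ∀ a b : L, a ∈ F → b ∈ F → a + b * γ = 0 → a = 0 ∧ b = 0 := by
    intro a b ha hb h
    by_cases hb0 : b = 0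
    · subst hb0; simp at h; exact ⟨h, rfl⟩
    · exfalso
      apply hγF
      have hγeq : γ = -a * b⁻¹ := by
        field_simp
        linear_combination h
      rw [hγeq]
      exact F.mul_mem (F.neg_mem ha) (F.inv_mem hb)
  have hγ2 : γ ^ 2 = A * γ + B := by rw [hA, hB]; ring
  have hkk : (γ ^ q ^ k) ^ q ^ k = γ := by
    rw [← pow_mul, ← pow_add, (show k + k = 2 * k by ring)]
    exact hLpow γ
  have hAF : A ∈ F := by
    rw [hFiff, hA, hfrob k, hkk, add_comm]
  have hBF : B ∈ F := by
    rw [hFiff, hB, hneg k, mul_pow, hkk]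
    ring
  have hFq : ∀ x ∈ F, ∀ j : ℕ, x ^ q ^ j ∈ F := by
    intro x hx j
    rw [hFiff]
    calc (x ^ q ^ j) ^ q ^ k = (x ^ q ^ k) ^ q ^ j := by
          rw [← pow_mul, ← pow_mul, mul_comm]
      _ = x ^ q ^ j := by rw [hFpow x hx]
  -- membership characterizations
  have hUmem : ∀ z : L, z ∈ U ↔ ∃ u ∈ F, z = u + u ^ q ^ s * γ := by
    intro z
    rw [← SetLike.mem_coe, hU]
    rfl
  have hkermem : ∀ z : L, z ∈ Kker ↔ z ∈ F ∧ f z = 0 := by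
    intro z
    rw [← SetLike.mem_coe, hker]
    rfl
  have hq2s : q ^ s * q ^ s = q ^ (2 * s) := by rw [← pow_add]; ring_nf
  have hCpow : ∀ x : L, (α₀ * x + α₁ * x ^ q ^ s * B) ^ q ^ s
      = α₀ ^ q ^ s * x ^ q ^ s + α₁ ^ q ^ s * x ^ q ^ (2 * s) * B ^ q ^ s := by
    intro x
    rw [hfrob s, mul_pow, mul_pow, mul_pow, ← pow_mul, hq2s]
  have hfx : ∀ x : L, f x = (α₀ * x + α₁ * x ^ q ^ s * B) ^ q ^ s
      - (α₀ * x ^ q ^ s + α₁ * x + α₁ * x ^ q ^ s * A) := by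
    intro x
    simp only [hf]
    linear_combination -hCpow x
  have hexp : ∀ x : L, α * (x + x ^ q ^ s * γ)
      = (α₀ * x + α₁ * x ^ q ^ s * B)
        + (α₀ * x ^ q ^ s + α₁ * x + α₁ * x ^ q ^ s * A) * γ := by
    intro x
    rw [hαeq]
    linear_combination (α₁ * x ^ q ^ s) * hγ2
  have hCmem : ∀ x ∈ F, (α₀ * x + α₁ * x ^ q ^ s * B) ∈ F := fun x hx =>
    F.add_mem (F.mul_mem hα₀ hx) (F.mul_mem (F.mul_mem hα₁ (hFq x hx s)) hBF)
  have hDmem : ∀ x ∈ F, (α₀ * x ^ q ^ s + α₁ * x + α₁ * x ^ q ^ s * A) ∈ F := fun x hx =>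
    F.add_mem (F.add_mem (F.mul_mem hα₀ (hFq x hx s)) (F.mul_mem hα₁ hx))
      (F.mul_mem (F.mul_mem hα₁ (hFq x hx s)) hAF)
  -- Part 1
  have part1 : ∀ x ∈ F, (α * (x + x ^ q ^ s * γ) ∈ U ⊓ shiftSub K L α U ↔ f x = 0) := by
    intro x hx
    have hmemα : α * (x + x ^ q ^ s * γ) ∈ shiftSub K L α U := by
      refine Submodule.mem_map.mpr ⟨x + x ^ q ^ s * γ, (hUmem _).mpr ⟨x, hx, rfl⟩, ?_⟩
      simp [LinearMap.mulLeft_apply]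
    rw [Submodule.mem_inf]
    constructor
    · rintro ⟨hmemU, -⟩
      obtain ⟨u, hu, huz⟩ := (hUmem _).mp hmemU
      rw [hexp] at huz
      have h0 : ((α₀ * x + α₁ * x ^ q ^ s * B) - u)
          + ((α₀ * x ^ q ^ s + α₁ * x + α₁ * x ^ q ^ s * A) - u ^ q ^ s) * γ = 0 := by
        linear_combination huz
      obtain ⟨h1, h2⟩ := hcoord0 _ _ (F.sub_mem (hCmem x hx) hu)
        (F.sub_mem (hDmem x hx) (hFq u hu s)) h0
      have hCu : (α₀ * x + α₁ * x ^ q ^ s * B) = u := sub_eq_zero.mp h1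
      have hDu : (α₀ * x ^ q ^ s + α₁ * x + α₁ * x ^ q ^ s * A) = u ^ q ^ s := sub_eq_zero.mp h2
      rw [hfx, hCu, hDu, sub_self]
    · intro hfx0
      refine ⟨?_, hmemα⟩
      rw [hexp]
      refine (hUmem _).mpr ⟨α₀ * x + α₁ * x ^ q ^ s * B, hCmem x hx, ?_⟩
      have hD : (α₀ * x ^ q ^ s + α₁ * x + α₁ * x ^ q ^ s * A)
          = (α₀ * x + α₁ * x ^ q ^ s * B) ^ q ^ s := by
        linear_combination hfx x - hfx0
      rw [hD]
  -- Part 2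
  let ψ : L →ₗ[K] L :=
    { toFun := fun x => α * (x + x ^ q ^ s * γ)
      map_add' := fun x y => by
        show α * ((x + y) + (x + y) ^ q ^ s * γ)
          = α * (x + x ^ q ^ s * γ) + α * (y + y ^ q ^ s * γ)
        rw [hfrob s]
        ring
      map_smul' := fun c x => by
        show α * ((c • x) + (c • x) ^ q ^ s * γ) = c • (α * (x + x ^ q ^ s * γ))
        simp only [Algebra.smul_def]
        rw [mul_pow, hKfix c s]
        ring }
  let g : ↥Kker →ₗ[K] L := ψ.comp Kker.subtype
  have hgval : ∀ z : ↥Kker, g z = α * ((z : L) + (z : L) ^ q ^ s * γ) := fun z => rfl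
  have hginj : Function.Injective g := by
    intro z w hzw
    rw [hgval, hgval] at hzw
    have h2 := mul_left_cancel₀ hα hzw
    have hzF : (z : L) ∈ F := ((hkermem _).mp z.2).1
    have hwF : (w : L) ∈ F := ((hkermem _).mp w.2).1
    have h0 : ((z : L) - w) + ((z : L) - w) ^ q ^ s * γ = 0 := by
      rw [hsub s]
      linear_combination h2
    obtain ⟨h3, -⟩ := hcoord0 _ _ (F.sub_mem hzF hwF)
      (hFq _ (F.sub_mem hzF hwF) s) h0
    exact Subtype.ext (sub_eq_zero.mp h3)
  have hgrange : LinearMap.range g = U ⊓ shiftSub K L α U := by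
    apply le_antisymm
    · rintro y ⟨z, rfl⟩
      obtain ⟨hzF, hzf⟩ := (hkermem _).mp z.2
      rw [hgval]
      exact (part1 _ hzF).mpr hzf
    · rintro y hy
      obtain ⟨hyU, hyα⟩ := Submodule.mem_inf.mp hy
      obtain ⟨z, hzU, rfl⟩ := Submodule.mem_map.mp hyα
      obtain ⟨u, hu, rfl⟩ := (hUmem z).mp hzU
      have hmem : α * (u + u ^ q ^ s * γ) ∈ U ⊓ shiftSub K L α U := by
        rw [Submodule.mem_inf]
        constructor
        · simpa [LinearMap.mulLeft_apply] using hyU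
        · exact Submodule.mem_map.mpr ⟨u + u ^ q ^ s * γ, hzU, rfl⟩
      have hf0 : f u = 0 := (part1 u hu).mp hmem
      refine ⟨⟨u, (hkermem u).mpr ⟨hu, hf0⟩⟩, ?_⟩
      rw [hgval]
      simp [LinearMap.mulLeft_apply]
  have part2 : Module.finrank K ↥(U ⊓ shiftSub K L α U) = Module.finrank K ↥Kker := by
    rw [← hgrange]
    exact LinearMap.finrank_range_of_inj hginj
  -- Part 3
  have hq1k : ∀ x : L, x ^ q = x → x ∈ F := by
    intro x hx
    rw [hFiff]
    have h1 : x ^ q ^ 1 = x := by rwa [pow_one]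
    have h2 := hiter x 1 h1 k
    rwa [one_mul] at h2
  have h3back : (∃ c : K, algebraMap K L c = α) → ∀ x ∈ F, f x = 0 := by
    rintro ⟨c, rfl⟩ x hx
    set a := algebraMap K L c with ha
    have haF : a ∈ F := hq1k a (by rw [ha, ← map_pow, hKpow])
    have h0 : (α₀ - a) + α₁ * γ = 0 := by linear_combination -hαeq
    obtain ⟨h1, h2⟩ := hcoord0 _ _ (F.sub_mem hα₀ haF) hα₁ h0
    have hα₀a : α₀ = a := sub_eq_zero.mp h1
    have hfixα₀ : α₀ ^ q ^ s = α₀ := by rw [hα₀a, ha, hKfix]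
    simp only [hf]
    simp [h2, hfixα₀, zero_pow (hq0 s)]
  have h3fwd : (∀ x ∈ F, f x = 0) → ∃ c : K, algebraMap K L c = α := by
    intro hall
    -- distinctness of frobenius powers on F
    have hA1 : ¬ (∀ y ∈ F, y ^ q ^ s = y) := hnotall s (by omega) hsk'
    have hA2 : ¬ (∀ y ∈ F, y ^ q ^ (2 * s) = y) := by
      intro h
      have hndvd : ¬ (k ∣ 2 * s) := by
        intro hd
        have hcop : Nat.Coprime k s := Nat.coprime_comm.mp hgcd
        have h2 : k ∣ 2 := hcop.dvd_of_dvd_mul_right hd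
        have := Nat.le_of_dvd (by omega) h2
        omega
      set m := (2 * s) % k with hm
      have hm0 : 0 < m := Nat.pos_of_ne_zero (fun h0 => hndvd (Nat.dvd_of_mod_eq_zero h0))
      apply hnotall m hm0 (Nat.mod_lt _ (by omega))
      intro y hy
      have hdm : 2 * s = k * (2 * s / k) + m := by rw [hm]; exact (Nat.div_add_mod _ _).symm
      calc y ^ q ^ m = (y ^ q ^ (k * (2 * s / k))) ^ q ^ m := by
            rw [hiter y k (hFpow y hy) (2 * s / k)]
        _ = y ^ (q ^ (k * (2 * s / k)) * q ^ m) := (pow_mul y _ _).symm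
        _ = y ^ q ^ (2 * s) := by rw [← pow_add, ← hdm]
        _ = y := h y hy
    have hA3 : ¬ (∀ y ∈ F, y ^ q ^ s = y ^ q ^ (2 * s)) := by
      intro h
      apply hA1
      intro y hy
      have hz : y ^ q ^ (k - s) ∈ F := hFq y hy (k - s)
      have h1 : (y ^ q ^ (k - s)) ^ q ^ s = y := by
        rw [← pow_mul, ← pow_add, Nat.sub_add_cancel (by omega)]
        exact hFpow y hy
      have h3 : (y ^ q ^ (k - s)) ^ q ^ (2 * s) = y ^ q ^ s := by
        rw [← pow_mul, ← pow_add, (show k - s + 2 * s = k + s by omega), pow_add, pow_mul,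
          hFpow y hy]
      have h2 := h _ hz
      rw [h1, h3] at h2
      exact h2.symm
    -- characters
    let φ : Fin 3 → (↥F →* L) := fun j =>
      MonoidHom.comp (F.subtype : ↥F →+* L).toMonoidHom (powMonoidHom (q ^ ((j : ℕ) * s)))
    have hφval : ∀ (j : Fin 3) (y : ↥F), φ j y = (y : L) ^ q ^ ((j : ℕ) * s) := by
      intro j y
      simp [φ, powMonoidHom]
    have hvals : ∀ i j : Fin 3, φ i = φ j → ∀ y ∈ F, y ^ q ^ ((i : ℕ) * s) = y ^ q ^ ((j : ℕ) * s) := by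
      intro i j hij y hy
      have h := DFunLike.congr_fun hij (⟨y, hy⟩ : ↥F)
      rw [hφval, hφval] at h
      exact h
    have hc01 : ¬ (∀ y ∈ F, y ^ q ^ (0 * s) = y ^ q ^ (1 * s)) := by
      intro h
      apply hA1
      intro y hy
      have := (h y hy).symm
      simpa using this
    have hc02 : ¬ (∀ y ∈ F, y ^ q ^ (0 * s) = y ^ q ^ (2 * s)) := by
      intro h
      apply hA2
      intro y hy
      have := (h y hy).symm
      simpa using this
    have hc12 : ¬ (∀ y ∈ F, y ^ q ^ (1 * s) = y ^ q ^ (2 * s)) := by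
      intro h
      apply hA3
      intro y hy
      simpa using h y hy
    have hφinj : Function.Injective φ := by
      intro i j hij
      fin_cases i <;> fin_cases j
      · rfl
      · exact absurd (hvals _ _ hij) hc01
      · exact absurd (hvals _ _ hij) hc02
      · exact absurd (fun y hy => (hvals _ _ hij y hy).symm) hc01
      · rfl
      · exact absurd (hvals _ _ hij) hc12
      · exact absurd (fun y hy => (hvals _ _ hij y hy).symm) hc02
      · exact absurd (fun y hy => (hvals _ _ hij y hy).symm) hc12
      · rfl
    have hli : LinearIndependent L (fun j : Fin 3 => ⇑(φ j)) :=
      (linearIndependent_monoidHom ↥F L).comp φ hφinj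
    let g3 : Fin 3 → L := ![-α₁, α₀ ^ q ^ s - α₀ - α₁ * A, α₁ ^ q ^ s * B ^ q ^ s]
    have hsum : ∑ j : Fin 3, g3 j • (⇑(φ j) : ↥F → L) = 0 := by
      funext y
      have h0 := hall (y : L) y.2
      simp only [hf] at h0
      simp only [Fin.sum_univ_three, Pi.add_apply, Pi.smul_apply, smul_eq_mul,
        Pi.zero_apply, hφval, g3, Matrix.cons_val_zero, Matrix.cons_val_one, Matrix.head_cons,
        Matrix.cons_val_two, Matrix.tail_cons]
      simp only [Fin.val_zero, Fin.val_one, Fin.val_two, zero_mul, one_mul, pow_zero, pow_one]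
      linear_combination h0
    have hzero := Fintype.linearIndependent_iff.mp hli g3 hsum
    have hα₁0 : α₁ = 0 := by
      have h := hzero 0
      simpa [g3, neg_eq_zero] using h
    have hα₀s : α₀ ^ q ^ s = α₀ := by
      have h := hzero 1
      simp only [g3, Matrix.cons_val_one, Matrix.head_cons, Matrix.cons_val_zero, hα₁0, zero_mul, sub_zero] at h
      linear_combination h
    obtain ⟨b, -, hb⟩ := Nat.exists_mul_mod_eq_one_of_coprime hgcd (by omega)
    have hsb : s * b = k * (s * b / k) + (s * b) % k := (Nat.div_add_mod _ _).symm
    rw [hb] at hsb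
    have h1 : α₀ ^ q ^ (s * b) = α₀ := hiter α₀ s hα₀s b
    have h2 : α₀ ^ q ^ (s * b) = α₀ ^ q := by
      rw [hsb, pow_add, pow_one, pow_mul, hiter α₀ k (hFpow α₀ hα₀) (s * b / k)]
    obtain ⟨c, hc⟩ := (hKiff α₀).mp (by rw [← h2, h1])
    refine ⟨c, ?_⟩
    rw [hαeq, hα₁0, zero_mul, add_zero]
    exact hc
  exact ⟨part1, part2, ⟨h3fwd, h3back⟩⟩
end

section
/- Let q be a prime power, k > 2, n = 2k, s ∈ {1,…,k−1} with gcd(s,k) = 1, and γ ∈ 𝔽_{q^n} with 𝔽_{q^n} = 𝔽_{q^k}(γ). Then the cyclic orbit code O_{s,γ} = Orb(U_{s,γ}) is a full-length orbit code (i.e. Stab(U_{s,γ}) = 𝔽_q^*), and its minimum distance satisfies d(O_{s,γ}) ∈ {2k−4, 2k−2}; that is, O_{s,γ} is either quasi-optimal or optimal. -/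
open Polynomial in
theorem aux_ncard_pow_eq_le (L : Type*) [Field L] [Fintype L] (m : ℕ) (hm : 1 < m) :
    ({x : L | x ^ m = x}).ncard ≤ m := by
  classical
  have hP : (X ^ m - X : L[X]) ≠ 0 := by
    intro h
    have := congrArg (fun p => p.coeff m) h
    rw [coeff_sub, coeff_X_pow, coeff_X, if_pos rfl, if_neg (by omega : ¬ (1 = m))] at this
    simp at this
  have hsub : {x : L | x ^ m = x} ⊆ ((X ^ m - X : L[X]).roots.toFinset : Set L) := by
    intro x hx
    simp only [Set.mem_setOf_eq] at hx
    simp [Multiset.mem_toFinset, mem_roots, hP, IsRoot, hx, sub_eq_zero]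
  calc ({x : L | x ^ m = x}).ncard ≤ ((X ^ m - X : L[X]).roots.toFinset : Set L).ncard :=
        Set.ncard_le_ncard hsub (Set.toFinite _)
    _ = (X ^ m - X : L[X]).roots.toFinset.card := Set.ncard_coe_finset _
    _ ≤ Multiset.card (X ^ m - X : L[X]).roots := Multiset.toFinset_card_le _
    _ ≤ (X ^ m - X : L[X]).natDegree := card_roots' _
    _ ≤ m := by
        apply natDegree_sub_le _ _ |>.trans
        simp [natDegree_X_pow]; omega

theorem aux_pow_eq_self_mem (L : Type*) [Field L] [Fintype L] (m : ℕ) (hm : 1 < m) (S : Set L)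
    (hcard : Nat.card S = m) (hS : ∀ x ∈ S, x ^ m = x) : ∀ x : L, x ^ m = x → x ∈ S := by
  have hsub : S ⊆ {x : L | x ^ m = x} := fun x hx => hS x hx
  have : S = {x : L | x ^ m = x} := by
    apply Set.eq_of_subset_of_ncard_le hsub ?_ (Set.toFinite _)
    calc ({x : L | x ^ m = x}).ncard ≤ m := aux_ncard_pow_eq_le L m hm
      _ = S.ncard := by rw [← hcard, Nat.card_coe_set_eq]
  intro x hx
  rw [this]; exact hx

theorem aux_ratio_count (L : Type*) [Field L] [Fintype L] (q s : ℕ) (F : Subfield L)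
    (hq2 : 1 < q)
    (hfix : ∀ x ∈ F, x ^ q ^ s = x → x ^ q = x) (t : L) :
    ({y : L | y ∈ F ∧ y ^ q ^ s = t * y}).ncard ≤ q := by
  classical
  set A := {y : L | y ∈ F ∧ y ^ q ^ s = t * y} with hA
  by_cases h0 : A ⊆ {0}
  · calc A.ncard ≤ ({0} : Set L).ncard := Set.ncard_le_ncard h0 (Set.finite_singleton _)
      _ = 1 := Set.ncard_singleton _
      _ ≤ q := by omega
  · rw [Set.not_subset] at h0
    obtain ⟨y0, hy0A, hy0⟩ := h0
    simp only [Set.mem_singleton_iff] at hy0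
    have ht : t ≠ 0 := by
      intro ht0
      have := hy0A.2
      rw [ht0, zero_mul, pow_eq_zero_iff (by positivity)] at this
      exact hy0 this
    have hinj : Set.InjOn (fun y => y * y0⁻¹) A :=
      fun a _ b _ h => by
        field_simp at h; exact h
    have himg : (fun y => y * y0⁻¹) '' A ⊆ {x : L | x ^ q = x} := by
      rintro _ ⟨y, hy, rfl⟩
      have h1 : (y * y0⁻¹) ^ q ^ s = y * y0⁻¹ := by
        rw [mul_pow, hy.2, inv_pow, hy0A.2, mul_inv]
        field_simp
      have hmem : y * y0⁻¹ ∈ F := F.mul_mem hy.1 (F.inv_mem hy0A.1)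
      exact hfix _ hmem h1
    calc A.ncard = ((fun y => y * y0⁻¹) '' A).ncard := (Set.ncard_image_of_injOn hinj).symm
      _ ≤ ({x : L | x ^ q = x}).ncard := Set.ncard_le_ncard himg (Set.toFinite _)
      _ ≤ q := aux_ncard_pow_eq_le L q hq2

theorem aux_skew_count (L : Type*) [Field L] [Fintype L] (q s : ℕ) (F : Subfield L)
    (hq2 : 1 < q)
    (hfix : ∀ x ∈ F, x ^ q ^ s = x → x ^ q = x)
    (hadd : ∀ x y : L, (x - y) ^ q ^ s = x ^ q ^ s - y ^ q ^ s)
    (C2 C1 C0 : L) (hne : ¬(C2 = 0 ∧ C1 = 0 ∧ C0 = 0)) :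
    ({u : L | u ∈ F ∧ C2 * (u ^ q ^ s) ^ q ^ s + C1 * u ^ q ^ s + C0 * u = 0}).ncard ≤ q * q := by
  classical
  set S := {u : L | u ∈ F ∧ C2 * (u ^ q ^ s) ^ q ^ s + C1 * u ^ q ^ s + C0 * u = 0} with hS
  have hq1 : 1 ≤ q := le_of_lt hq2
  by_cases hC2 : C2 = 0
  · by_cases hC1 : C1 = 0
    · have hC0 : C0 ≠ 0 := by tauto
      have h0 : S ⊆ {0} := by
        rintro u ⟨-, hu⟩
        rw [hC2, hC1, zero_mul, zero_mul, zero_add, zero_add] at hu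
        simpa [hC0] using hu
      calc S.ncard ≤ ({0} : Set L).ncard := Set.ncard_le_ncard h0 (Set.finite_singleton _)
        _ = 1 := Set.ncard_singleton _
        _ ≤ q * q := by nlinarith
    · have h0 : S ⊆ {y : L | y ∈ F ∧ y ^ q ^ s = (-C0 / C1) * y} := by
        rintro u ⟨huF, hu⟩
        refine ⟨huF, ?_⟩
        rw [hC2, zero_mul, zero_add] at hu
        field_simp
        linear_combination hu
      calc S.ncard ≤ _ := Set.ncard_le_ncard h0 (Set.toFinite _)
        _ ≤ q := aux_ratio_count L q s F hq2 hfix _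
        _ ≤ q * q := Nat.le_mul_of_pos_left q (by omega)
  · by_cases h0 : S ⊆ {0}
    · calc S.ncard ≤ ({0} : Set L).ncard := Set.ncard_le_ncard h0 (Set.finite_singleton _)
        _ = 1 := Set.ncard_singleton _
        _ ≤ q * q := by nlinarith
    · rw [Set.not_subset] at h0
      obtain ⟨u1, hu1S, hu1⟩ := h0
      simp only [Set.mem_singleton_iff] at hu1
      set μ := u1 ^ q ^ s * u1⁻¹ with hμ
      have hμF : μ ∈ F := F.mul_mem (F.pow_mem hu1S.1 _) (F.inv_mem hu1S.1)
      set e := C1 + C2 * μ ^ q ^ s with he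
      set T : L → L := fun u => u ^ q ^ s - μ * u with hT
      have hkey : ∀ u : L, C2 * (T u) ^ q ^ s + e * (T u)
          = (C2 * (u ^ q ^ s) ^ q ^ s + C1 * u ^ q ^ s + C0 * u) - (C0 + e * μ) * u := by
        intro u
        have h1 : (T u) ^ q ^ s = (u ^ q ^ s) ^ q ^ s - μ ^ q ^ s * u ^ q ^ s := by
          rw [hT]; simp only []
          rw [hadd, mul_pow]
        simp only [hT]
        rw [h1, he]
        ring
      have hTu1 : T u1 = 0 := by
        simp only [hT, hμ]
        field_simp
        ring
      have hr : C0 + e * μ = 0 := by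
        have h := hkey u1
        rw [hTu1, hu1S.2, zero_pow (by positivity : q ^ s ≠ 0), mul_zero, mul_zero,
          add_zero, zero_sub] at h
        have h2 : (C0 + e * μ) * u1 = 0 := by linear_combination h
        rcases mul_eq_zero.mp h2 with h3 | h3
        · exact h3
        · exact absurd h3 hu1
      have hroot : ∀ u ∈ S, C2 * (T u) ^ q ^ s + e * (T u) = 0 := by
        intro u hu
        rw [hkey u, hu.2, hr]
        ring
      set M := {y : L | y ∈ F ∧ y ^ q ^ s = (-e / C2) * y} with hM
      set N := {y : L | y ∈ F ∧ y ^ q ^ s = μ * y} with hN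
      have hMq : M.ncard ≤ q := aux_ratio_count L q s F hq2 hfix _
      have hNq : N.ncard ≤ q := aux_ratio_count L q s F hq2 hfix _
      have hTS : ∀ u ∈ S, T u ∈ M := by
        intro u hu
        refine ⟨F.sub_mem (F.pow_mem hu.1 _) (F.mul_mem hμF hu.1), ?_⟩
        have := hroot u hu
        field_simp
        linear_combination this
      set Sf := (Set.toFinite S).toFinset with hSf
      set Mf := (Set.toFinite M).toFinset with hMf
      set Nf := (Set.toFinite N).toFinset with hNf
      have hcard : S.ncard = Sf.card := (Set.ncard_eq_toFinset_card S (Set.toFinite S))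
      rw [hcard]
      have key : Sf.card ≤ q * (Sf.image T).card := by
        apply Finset.card_le_mul_card_image
        intro a ha
        rw [Finset.mem_image] at ha
        obtain ⟨xa, hxa, rfl⟩ := ha
        have hsub : (Sf.filter fun x => T x = T xa) ⊆ Nf.image (fun w => w + xa) := by
          intro x hx
          rw [Finset.mem_filter] at hx
          rw [Finset.mem_image]
          refine ⟨x - xa, ?_, by ring⟩
          rw [hNf, Set.Finite.mem_toFinset]
          have hxS : x ∈ S := by rw [hSf, Set.Finite.mem_toFinset] at hx; exact hx.1
          have hxaS : xa ∈ S := by rw [hSf, Set.Finite.mem_toFinset] at hxa; exact hxa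
          refine ⟨F.sub_mem hxS.1 hxaS.1, ?_⟩
          have h2 := hx.2
          simp only [hT] at h2
          rw [hadd]
          have h3 : x ^ q ^ s - xa ^ q ^ s = μ * x - μ * xa := by linear_combination h2
          rw [h3]; ring
        calc (Sf.filter fun x => T x = T xa).card ≤ (Nf.image (fun w => w + xa)).card :=
              Finset.card_le_card hsub
          _ ≤ Nf.card := Finset.card_image_le
          _ ≤ q := by rw [hNf, ← Set.ncard_eq_toFinset_card]; exact hNq
      have key2 : (Sf.image T).card ≤ q := by
        have hsub : Sf.image T ⊆ Mf := by
          intro y hy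
          rw [Finset.mem_image] at hy
          obtain ⟨x, hx, rfl⟩ := hy
          rw [hMf, Set.Finite.mem_toFinset]
          exact hTS x (by rwa [hSf, Set.Finite.mem_toFinset] at hx)
        calc (Sf.image T).card ≤ Mf.card := Finset.card_le_card hsub
          _ ≤ q := by rw [hMf, ← Set.ncard_eq_toFinset_card]; exact hMq
      calc Sf.card ≤ q * (Sf.image T).card := key
        _ ≤ q * q := Nat.mul_le_mul_left q key2

theorem aux_pow_q_of (L : Type*) [Field L] (q s k : ℕ) (hk : 1 < k)
    (hgcd : Nat.gcd s k = 1) (x : L) (hk' : x ^ q ^ k = x) (hs' : x ^ q ^ s = x) :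
    x ^ q = x := by
  have hiter : ∀ m t : ℕ, x ^ q ^ m = x → x ^ q ^ (m * t) = x := by
    intro m t h
    induction t with
    | zero => simp
    | succ t ih =>
        have he : q ^ (m * (t + 1)) = q ^ (m * t) * q ^ m := by
          rw [← pow_add]; ring_nf
        rw [he, pow_mul, ih, h]
  obtain ⟨t, -, hst⟩ := Nat.exists_mul_mod_eq_one_of_coprime hgcd hk
  have hdm := Nat.div_add_mod (s * t) k
  rw [hst] at hdm
  obtain ⟨a, ha⟩ : ∃ a, s * t = k * a + 1 := ⟨s * t / k, hdm.symm⟩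
  have h1 : x ^ q ^ (k * a + 1) = x := by rw [← ha]; exact hiter s t hs'
  have h2 : x ^ q ^ (k * a) = x := hiter k _ hk'
  calc x ^ q = (x ^ q ^ (k * a)) ^ q := by rw [h2]
    _ = x ^ (q ^ (k * a) * q) := (pow_mul x _ q).symm
    _ = x ^ q ^ (k * a + 1) := by rw [pow_succ]
    _ = x := h1

theorem aux_card_submodule (K L : Type*) [Field K] [Field L] [Algebra K L] [Fintype K] [Fintype L]
    (V : Submodule K L) : Nat.card ↥V = Fintype.card K ^ Module.finrank K ↥V := by
  classical
  have : Fintype ↥V := Fintype.ofFinite _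
  rw [Nat.card_eq_fintype_card]
  exact Module.card_eq_pow_finrank

theorem statement_11 (q k s : ℕ) (hq : IsPrimePow q) (hk : 2 < k)
    (hs1 : 1 ≤ s) (hsk : s ≤ k - 1) (hgcd : Nat.gcd s k = 1)
    (K L : Type*) [Field K] [Field L] [Algebra K L] [Fintype K] [Fintype L]
    (hK : Fintype.card K = q) (hL : Fintype.card L = q ^ (2 * k))
    (F : Subfield L) (hF : Nat.card F = q ^ k)
    (γ : L) (hγ : Subfield.closure ((F : Set L) ∪ {γ}) = ⊤)
    (U : Submodule K L)
    (hU : (U : Set L) = {x : L | ∃ u ∈ F, x = u + u ^ q ^ s * γ}) :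
    stabSet K L U = baseUnits K L ∧
    (minDist K L k (orbCode K L U) = 2 * k - 4 ∨
      minDist K L k (orbCode K L U) = 2 * k - 2) := by
  classical
  have hq2 : 1 < q := hq.two_le
  -- characteristic
  obtain ⟨p, e, hpp, he, hpe⟩ := hq
  have hpnat : p.Prime := Nat.prime_iff.mpr hpp
  have hLcard : Fintype.card L = p ^ (e * (2 * k)) := by
    rw [hL, ← hpe, ← pow_mul]
  haveI : CharP L (ringChar L) := ringChar.charP L
  obtain ⟨n, hr, hcardr⟩ := FiniteField.card L (ringChar L)
  have hpr : p = ringChar L := by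
    have hdvd : p ∣ (ringChar L) ^ (n : ℕ) := by
      rw [← hcardr, hLcard]
      exact dvd_pow_self p (by positivity)
    have := hpnat.dvd_of_dvd_pow hdvd
    exact ((Nat.prime_dvd_prime_iff_eq hpnat hr).mp this)
  haveI : CharP L p := by rw [hpr]; exact ringChar.charP L
  haveI : Fact p.Prime := ⟨hpnat⟩
  have hqs_pow : q ^ s = p ^ (e * s) := by rw [← hpe, ← pow_mul]
  have haddpow : ∀ x y : L, (x + y) ^ q ^ s = x ^ q ^ s + y ^ q ^ s := by
    intro x y; rw [hqs_pow]; exact add_pow_char_pow x y p (e * s)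
  have hsubpow : ∀ x y : L, (x - y) ^ q ^ s = x ^ q ^ s - y ^ q ^ s := by
    intro x y; rw [hqs_pow]; exact sub_pow_char_pow x y (e * s)
  -- basic power facts
  have hFq : ∀ x ∈ F, x ^ q ^ k = x := by
    intro x hx
    have : Fintype ↥F := Fintype.ofFinite _
    have hcF : Fintype.card ↥F = q ^ k := by rw [← Nat.card_eq_fintype_card, hF]
    have h := FiniteField.pow_card (⟨x, hx⟩ : ↥F)
    rw [hcF] at h
    have := congrArg (Subtype.val) h
    simpa using this
  have hKq : ∀ c0 : K, algebraMap K L c0 ^ q = algebraMap K L c0 := by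
    intro c0
    rw [← map_pow]
    congr 1
    rw [← hK]
    exact FiniteField.pow_card c0
  have hκ : ∀ x : L, x ^ q = x → ∃ c0 : K, algebraMap K L c0 = x := by
    intro x hx
    have hmem := aux_pow_eq_self_mem L q hq2 (Set.range (algebraMap K L)) ?_ ?_ x hx
    · exact hmem
    · rw [Nat.card_range_of_injective (algebraMap K L).injective, Nat.card_eq_fintype_card, hK]
    · rintro _ ⟨c0, rfl⟩; exact hKq c0
  have hqk2 : 1 < q ^ k := Nat.one_lt_pow (by omega) hq2
  have hFmem : ∀ x : L, x ^ q ^ k = x → x ∈ F := by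
    intro x hx
    have := aux_pow_eq_self_mem L (q ^ k) hqk2 (F : Set L) ?_ ?_ x hx
    · exact this
    · exact hF
    · exact hFq
  have hfixκ : ∀ x ∈ F, x ^ q ^ s = x → ∃ c0 : K, algebraMap K L c0 = x := by
    intro x hx hxs
    exact hκ x (aux_pow_q_of L q s k (by omega) hgcd x (hFq x hx) hxs)
  have hfix' : ∀ x ∈ F, x ^ q ^ s = x → x ^ q = x := by
    intro x hx hxs
    exact aux_pow_q_of L q s k (by omega) hgcd x (hFq x hx) hxs
  have hκF : ∀ c0 : K, algebraMap K L c0 ∈ F := by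
    intro c0
    apply hFmem
    have hx := hKq c0
    have hiter : ∀ m : ℕ, algebraMap K L c0 ^ q ^ m = algebraMap K L c0 := by
      intro m
      induction m with
      | zero => simp
      | succ m ih => rw [pow_succ, pow_mul, ih]; exact hx
    exact hiter k
  have hγF : γ ∉ F := by
    intro hmem
    have hsub : ((F : Set L) ∪ {γ}) ⊆ (F : Set L) := by
      rintro z (hz | hz)
      · exact hz
      · simp only [Set.mem_singleton_iff] at hz
        rw [hz]; exact hmem
    have hle : Subfield.closure ((F : Set L) ∪ {γ}) ≤ F := (Subfield.closure_le).mpr hsub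
    rw [hγ] at hle
    have hall : ∀ z : L, z ∈ F := fun z => hle (Subfield.mem_top z)
    have hbij : Function.Bijective (Subtype.val : ↥F → L) :=
      ⟨Subtype.val_injective, fun z => ⟨⟨z, hall z⟩, rfl⟩⟩
    have hcc := Nat.card_eq_of_bijective _ hbij
    rw [hF, Nat.card_eq_fintype_card, hL] at hcc
    have hlt : q ^ k < q ^ (2 * k) := Nat.pow_lt_pow_right hq2 (by omega)
    omega
  have hγ0 : γ ≠ 0 := fun h => hγF (h ▸ F.zero_mem)
  have huniq : ∀ c d c' d' : L, c ∈ F → d ∈ F → c' ∈ F → d' ∈ F →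
      c + d * γ = c' + d' * γ → c = c' ∧ d = d' := by
    intro c d c' d' hc hd hc' hd' h
    by_cases hdd : d = d'
    · subst hdd
      exact ⟨by linear_combination h, rfl⟩
    · exfalso
      have hne : d' - d ≠ 0 := sub_ne_zero.mpr (Ne.symm hdd)
      have hγeq : γ = (c - c') * (d' - d)⁻¹ := by
        field_simp
        linear_combination -h
      exact hγF (hγeq ▸ F.mul_mem (F.sub_mem hc hc') (F.inv_mem (F.sub_mem hd' hd)))
  have hdecomp : ∀ α : L, ∃ c, c ∈ F ∧ ∃ d, d ∈ F ∧ α = c + d * γ := by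
    have hf : Function.Bijective (fun cd : ↥F × ↥F => (cd.1 : L) + (cd.2 : L) * γ) := by
      rw [Nat.bijective_iff_injective_and_card]
      constructor
      · rintro ⟨⟨c, hc⟩, ⟨d, hd⟩⟩ ⟨⟨c', hc'⟩, ⟨d', hd'⟩⟩ h
        simp only at h
        obtain ⟨h1, h2⟩ := huniq c d c' d' hc hd hc' hd' h
        simp [Prod.ext_iff, Subtype.ext_iff, h1, h2]
      · rw [Nat.card_prod, hF, Nat.card_eq_fintype_card, hL, ← pow_add, two_mul]
    intro α
    obtain ⟨⟨⟨c, hc⟩, ⟨d, hd⟩⟩, hfa⟩ := hf.2 α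
    exact ⟨c, hc, d, hd, hfa.symm⟩
  obtain ⟨b, hbF, a, haF, hγ2⟩ := hdecomp (γ * γ)
  have Umem : ∀ x : L, x ∈ U ↔ ∃ u, u ∈ F ∧ x = u + u ^ q ^ s * γ := by
    intro x
    constructor
    · intro hx
      have hx' : x ∈ (U : Set L) := hx
      rw [hU] at hx'
      exact hx'
    · intro hx
      have : x ∈ (U : Set L) := by rw [hU]; exact hx
      exact this
  have hinjφ : ∀ u v : L, u ∈ F → v ∈ F → u + u ^ q ^ s * γ = v + v ^ q ^ s * γ → u = v := by
    intro u v hu hv h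
    by_contra huv
    have hw : u - v ≠ 0 := sub_ne_zero.mpr huv
    have hwσ : (u - v) ^ q ^ s ≠ 0 := pow_ne_zero _ hw
    have heq : (u - v) + (u - v) ^ q ^ s * γ = 0 := by
      rw [hsubpow]
      linear_combination h
    have hγeq : γ = -(u - v) * ((u - v) ^ q ^ s)⁻¹ := by
      field_simp
      linear_combination heq
    apply hγF
    rw [hγeq]
    exact F.mul_mem (F.neg_mem (F.sub_mem hu hv)) (F.inv_mem (F.pow_mem (F.sub_mem hu hv) _))
  have cardU : Nat.card ↥U = q ^ k := by
    have hbij : Function.Bijective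
        (fun u : ↥F => (⟨(u : L) + (u : L) ^ q ^ s * γ, (Umem _).mpr ⟨u, u.2, rfl⟩⟩ : ↥U)) := by
      constructor
      · rintro ⟨u, hu⟩ ⟨v, hv⟩ h
        simp only [Subtype.ext_iff] at h ⊢
        exact hinjφ u v hu hv h
      · rintro ⟨x, hx⟩
        obtain ⟨u, huF, hxu⟩ := (Umem x).mp hx
        exact ⟨⟨u, huF⟩, by simp [Subtype.ext_iff, hxu.symm]⟩
    exact ((Nat.card_eq_of_bijective _ hbij).symm.trans hF)
  have memShift : ∀ (α : L) (V : Submodule K L) (x : L),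
      x ∈ shiftSub K L α V ↔ ∃ u ∈ V, α * u = x := by
    intro α V x
    simp [shiftSub, Submodule.mem_map, LinearMap.mulLeft_apply]
  have base_stab : ∀ δ : L, δ ≠ 0 → (∃ c0 : K, algebraMap K L c0 = δ) →
      shiftSub K L δ U = U := by
    rintro δ hδ ⟨c0, rfl⟩
    have hc0 : c0 ≠ 0 := by rintro rfl; simp at hδ
    ext x
    rw [memShift]
    constructor
    · rintro ⟨u, hu, rfl⟩
      have := U.smul_mem c0 hu
      rwa [Algebra.smul_def] at this
    · intro hx
      refine ⟨algebraMap K L c0⁻¹ * x, ?_, ?_⟩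
      · have := U.smul_mem c0⁻¹ hx
        rwa [Algebra.smul_def] at this
      · rw [← mul_assoc, ← map_mul, mul_inv_cancel₀ hc0, map_one, one_mul]
  have inter_bound : ∀ α : L, α ≠ 0 → (∀ c0 : K, algebraMap K L c0 ≠ α) →
      Nat.card ↥(U ⊓ shiftSub K L α U) ≤ q * q := by
    intro α hα hακ
    obtain ⟨c, hcF, d, hdF, hαcd⟩ := hdecomp α
    set C2 := b ^ q ^ s * d ^ q ^ s with hC2
    set C1 := c ^ q ^ s - c - a * d with hC1
    set C0 := -d with hC0
    have hne : ¬(C2 = 0 ∧ C1 = 0 ∧ C0 = 0) := by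
      rintro ⟨h2, h1, h0⟩
      rw [hC0, neg_eq_zero] at h0
      rw [hC1, h0] at h1
      have hcσ : c ^ q ^ s = c := by linear_combination h1
      obtain ⟨c0, hc0⟩ := hfixκ c hcF hcσ
      apply hακ c0
      rw [hc0, hαcd, h0]; ring
    have hcount := aux_skew_count L q s F hq2 hfix' hsubpow C2 C1 C0 hne
    set S := {u : L | u ∈ F ∧ C2 * (u ^ q ^ s) ^ q ^ s + C1 * u ^ q ^ s + C0 * u = 0} with hSdef
    set f : L → L := fun u => α * (u + u ^ q ^ s * γ) with hfdef
    have hsubset : ((U ⊓ shiftSub K L α U : Submodule K L) : Set L) ⊆ f '' S := by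
      intro x hx
      rw [SetLike.mem_coe, Submodule.mem_inf] at hx
      obtain ⟨hx1, hx2⟩ := hx
      rw [memShift] at hx2
      obtain ⟨t0, ht0U, hxt⟩ := hx2
      obtain ⟨u, huF, htu⟩ := (Umem t0).mp ht0U
      obtain ⟨v, hvF, hxv⟩ := (Umem x).mp hx1
      have hAB : α * (u + u ^ q ^ s * γ)
          = (c * u + b * (d * u ^ q ^ s)) + (c * u ^ q ^ s + d * u + a * (d * u ^ q ^ s)) * γ := by
        rw [hαcd]
        linear_combination (d * u ^ q ^ s) * hγ2
      have hxeq : v + v ^ q ^ s * γ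
          = (c * u + b * (d * u ^ q ^ s)) + (c * u ^ q ^ s + d * u + a * (d * u ^ q ^ s)) * γ := by
        calc v + v ^ q ^ s * γ = x := hxv.symm
          _ = α * t0 := hxt.symm
          _ = α * (u + u ^ q ^ s * γ) := by rw [htu]
          _ = _ := hAB
      have hABmem1 : (c * u + b * (d * u ^ q ^ s)) ∈ F :=
        F.add_mem (F.mul_mem hcF huF) (F.mul_mem hbF (F.mul_mem hdF (F.pow_mem huF _)))
      have hABmem2 : (c * u ^ q ^ s + d * u + a * (d * u ^ q ^ s)) ∈ F :=
        F.add_mem (F.add_mem (F.mul_mem hcF (F.pow_mem huF _)) (F.mul_mem hdF huF))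
          (F.mul_mem haF (F.mul_mem hdF (F.pow_mem huF _)))
      obtain ⟨hv1, hv2⟩ := huniq v (v ^ q ^ s) _ _ hvF (F.pow_mem hvF _) hABmem1 hABmem2 hxeq
      have hv3 : v ^ q ^ s
          = c ^ q ^ s * u ^ q ^ s + b ^ q ^ s * (d ^ q ^ s * (u ^ q ^ s) ^ q ^ s) := by
        rw [hv1, haddpow, mul_pow, mul_pow, mul_pow]
      have huS : u ∈ S := by
        refine ⟨huF, ?_⟩
        simp only [hC2, hC1, hC0]
        linear_combination hv2 - hv3
      refine ⟨u, huS, ?_⟩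
      simp only [hfdef]
      rw [← htu, hxt]
    have hinjOn : Set.InjOn f S := by
      intro u hu v hv h
      simp only [hfdef] at h
      exact hinjφ u v hu.1 hv.1 (mul_left_cancel₀ hα h)
    calc Nat.card ↥(U ⊓ shiftSub K L α U)
        = ((U ⊓ shiftSub K L α U : Submodule K L) : Set L).ncard := Nat.card_coe_set_eq _
      _ ≤ (f '' S).ncard := Set.ncard_le_ncard hsubset (Set.toFinite _)
      _ = S.ncard := Set.ncard_image_of_injOn hinjOn
      _ ≤ q * q := hcount
  have hqq_lt : q * q < q ^ k := by
    have h1 : q ^ 2 < q ^ k := Nat.pow_lt_pow_right hq2 hk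
    rw [pow_two] at h1
    exact h1
  have stab_eq : stabSet K L U = baseUnits K L := by
    ext α
    constructor
    · rintro ⟨hα0, hαU⟩
      refine ⟨hα0, ?_⟩
      by_contra hno
      push_neg at hno
      have hb := inter_bound α hα0 hno
      rw [hαU, inf_idem, cardU] at hb
      omega
    · rintro ⟨hα0, c0, hc0⟩
      exact ⟨hα0, base_stab α hα0 ⟨c0, hc0⟩⟩
  have finr : ∀ V : Submodule K L, Nat.card ↥V = q ^ Module.finrank K ↥V := by
    intro V; rw [aux_card_submodule, hK]
  have shift_comp : ∀ α δ : L, shiftSub K L (α * δ) U = shiftSub K L α (shiftSub K L δ U) := by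
    intro α δ
    ext x
    rw [memShift, memShift]
    constructor
    · rintro ⟨u, hu, rfl⟩
      refine ⟨δ * u, ?_, by ring⟩
      rw [memShift]
      exact ⟨u, hu, rfl⟩
    · rintro ⟨w, hw, rfl⟩
      rw [memShift] at hw
      obtain ⟨u, hu, rfl⟩ := hw
      exact ⟨u, hu, by ring⟩
  have pair_card : ∀ V W : Submodule K L, V ∈ orbCode K L U → W ∈ orbCode K L U → V ≠ W →
      Nat.card ↥(V ⊓ W) ≤ q * q := by
    rintro V W ⟨α, hα0, rfl⟩ ⟨β, hβ0, rfl⟩ hVW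
    set δ := α⁻¹ * β with hδ
    have hδ0 : δ ≠ 0 := mul_ne_zero (inv_ne_zero hα0) hβ0
    have hβδ : β = α * δ := by rw [hδ]; field_simp
    have hδκ : ∀ c0 : K, algebraMap K L c0 ≠ δ := by
      intro c0 hc0
      apply hVW
      rw [hβδ, shift_comp, base_stab δ hδ0 ⟨c0, hc0⟩]
    have hbd := inter_bound δ hδ0 hδκ
    have hseteq : ((shiftSub K L α U ⊓ shiftSub K L β U : Submodule K L) : Set L)
        = (fun y => α * y) '' ((U ⊓ shiftSub K L δ U : Submodule K L) : Set L) := by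
      ext x
      simp only [SetLike.mem_coe, Submodule.mem_inf, Set.mem_image]
      constructor
      · rintro ⟨hx1, hx2⟩
        rw [memShift] at hx1 hx2
        obtain ⟨u, hu, rfl⟩ := hx1
        obtain ⟨t0, ht0, hteq⟩ := hx2
        refine ⟨u, ?_, rfl⟩
        show u ∈ U ⊓ shiftSub K L δ U
        rw [Submodule.mem_inf]
        refine ⟨hu, ?_⟩
        rw [memShift]
        refine ⟨t0, ht0, ?_⟩
        have hcc : α * (δ * t0) = α * u := by rw [← mul_assoc, ← hβδ]; exact hteq
        exact (mul_left_cancel₀ hα0 hcc)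
      · rintro ⟨y, hy, rfl⟩
        have hy' : y ∈ U ⊓ shiftSub K L δ U := hy
        rw [Submodule.mem_inf] at hy'
        obtain ⟨hy1, hy2⟩ := hy'
        constructor
        · rw [memShift]; exact ⟨y, hy1, rfl⟩
        · rw [memShift] at hy2 ⊢
          obtain ⟨t0, ht0, hteq⟩ := hy2
          exact ⟨t0, ht0, by rw [hβδ, mul_assoc, hteq]⟩
    have hcards : Nat.card ↥(shiftSub K L α U ⊓ shiftSub K L β U)
        = Nat.card ↥(U ⊓ shiftSub K L δ U) := by
      calc Nat.card ↥(shiftSub K L α U ⊓ shiftSub K L β U)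
          = ((shiftSub K L α U ⊓ shiftSub K L β U : Submodule K L) : Set L).ncard :=
            Nat.card_coe_set_eq _
        _ = ((fun y => α * y) '' ((U ⊓ shiftSub K L δ U : Submodule K L) : Set L)).ncard := by
            rw [hseteq]
        _ = (((U ⊓ shiftSub K L δ U : Submodule K L) : Set L)).ncard :=
            Set.ncard_image_of_injective _ (mul_right_injective₀ hα0)
        _ = Nat.card ↥(U ⊓ shiftSub K L δ U) := (Nat.card_coe_set_eq _).symm
    rw [hcards]
    exact hbd
  have pair_le2 : ∀ V W : Submodule K L, V ∈ orbCode K L U → W ∈ orbCode K L U → V ≠ W →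
      Module.finrank K ↥(V ⊓ W) ≤ 2 := by
    intro V W hV hW hVW
    have h1 := pair_card V W hV hW hVW
    rw [finr] at h1
    apply (Nat.pow_le_pow_iff_right hq2).mp
    rw [pow_two]
    exact h1
  have hUC : U ∈ orbCode K L U := by
    refine ⟨1, one_ne_zero, ?_⟩
    symm
    ext x
    rw [memShift]
    simp
  have hexx : ∃ x, x ∈ U ∧ x ≠ 0 := by
    by_contra hno
    push_neg at hno
    have hsub : (U : Set L) ⊆ {0} := fun z hz => hno z hz
    have h1 := Set.ncard_le_ncard hsub (Set.finite_singleton _)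
    rw [Set.ncard_singleton] at h1
    have h2 : Nat.card ↥U = (U : Set L).ncard := Nat.card_coe_set_eq _
    rw [cardU] at h2
    omega
  obtain ⟨x, hxU, hx0⟩ := hexx
  set g : K → L := fun c0 => algebraMap K L c0 * x with hg
  have hginj : Function.Injective g := by
    intro c1 c2 h
    simp only [hg] at h
    exact (algebraMap K L).injective (mul_right_cancel₀ hx0 h)
  have hrange_card : Nat.card ↥(Set.range g) = q := by
    rw [Nat.card_range_of_injective hginj, Nat.card_eq_fintype_card, hK]
  have hexy : ∃ y, y ∈ U ∧ y ∉ Set.range g := by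
    by_contra hno
    push_neg at hno
    have hsub : (U : Set L) ⊆ Set.range g := fun z hz => hno z hz
    have h1 := Set.ncard_le_ncard hsub (Set.toFinite _)
    have h2 : (U : Set L).ncard = q ^ k := by
      rw [← Nat.card_coe_set_eq]; exact cardU
    have h3 : (Set.range g).ncard = q := by
      rw [← Nat.card_coe_set_eq]; exact hrange_card
    have h4 : q < q ^ k := by
      calc q = q ^ 1 := (pow_one q).symm
        _ < q ^ k := Nat.pow_lt_pow_right hq2 (by omega)
    omega
  obtain ⟨y, hyU, hyg⟩ := hexy
  have hy0 : y ≠ 0 := by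
    rintro rfl
    exact hyg ⟨0, by simp [hg]⟩
  set α1 := y * x⁻¹ with hα1
  have hα10 : α1 ≠ 0 := mul_ne_zero hy0 (inv_ne_zero hx0)
  have hα1κ : ∀ c0 : K, algebraMap K L c0 ≠ α1 := by
    intro c0 hc0
    apply hyg
    refine ⟨c0, ?_⟩
    simp only [hg]
    rw [hc0, hα1]
    field_simp
  set W1 := shiftSub K L α1 U with hW1
  have hW1C : W1 ∈ orbCode K L U := ⟨α1, hα10, rfl⟩
  have hUW1 : U ≠ W1 := by
    intro hEq
    have hb := inter_bound α1 hα10 hα1κ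
    rw [← hW1, ← hEq, inf_idem, cardU] at hb
    omega
  have hyW1 : y ∈ W1 := by
    rw [hW1, memShift]
    refine ⟨x, hxU, ?_⟩
    rw [hα1]
    field_simp
  have hf1 : 1 ≤ Module.finrank K ↥(U ⊓ W1) := by
    by_contra hno
    push_neg at hno
    have hf0 : Module.finrank K ↥(U ⊓ W1) = 0 := by omega
    have hc := finr (U ⊓ W1)
    rw [hf0, pow_zero] at hc
    have hpair : ({0, y} : Set L) ⊆ ((U ⊓ W1 : Submodule K L) : Set L) := by
      rintro z (rfl | hz)
      · exact Submodule.zero_mem _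
      · simp only [Set.mem_singleton_iff] at hz
        rw [hz, SetLike.mem_coe, Submodule.mem_inf]
        exact ⟨hyU, hyW1⟩
    have h2 := Set.ncard_le_ncard hpair (Set.toFinite _)
    rw [Set.ncard_pair (Ne.symm hy0)] at h2
    have h3 : ((U ⊓ W1 : Submodule K L) : Set L).ncard = 1 := by
      rw [← Nat.card_coe_set_eq]; exact hc
    omega
  set D := {d : ℕ | ∃ V ∈ orbCode K L U, ∃ W ∈ orbCode K L U, V ≠ W ∧ d = subDist K L k V W}
    with hD
  have hd1mem : subDist K L k U W1 ∈ D := ⟨U, hUC, W1, hW1C, hUW1, rfl⟩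
  have hsinf_mem : sInf D ∈ D := Nat.sInf_mem ⟨_, hd1mem⟩
  obtain ⟨V0, hV0, W0, hW0, hne0, heq0⟩ := hsinf_mem
  have hf0le := pair_le2 V0 W0 hV0 hW0 hne0
  have hle := Nat.sInf_le hd1mem
  have e0 : sInf D = 2 * (k - Module.finrank K ↥(V0 ⊓ W0)) := heq0
  have e1 : subDist K L k U W1 = 2 * (k - Module.finrank K ↥(U ⊓ W1)) := rfl
  refine ⟨stab_eq, ?_⟩
  have hmd : minDist K L k (orbCode K L U) = sInf D := rfl
  rw [hmd]
  rw [e1] at hle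
  omega
end

section
/- Let p be a prime, q = p^h, k > 2, n = 2k. For i = 1,2 let s_i ∈ {1,…,k} with gcd(s_i,k) = 1, let γ_i ∈ 𝔽_{q^n}∖𝔽_{q^k}, and set U_{s_i,γ_i} = {a + γ_i a^{q^{s_i}} : a ∈ 𝔽_{q^k}}. Let σ ∈ Gal(𝔽_{q^n}/𝔽_p). Then σ(Orb(U_{s_1,γ_1})) = Orb(U_{s_2,γ_2}) if and only if either [s_1 ≠ s_2, s_1 + s_2 ≡ 0 (mod k), and σ(γ_1)γ_2 ∈ θ_q(𝔽_{q^k})] or [s_1 = s_2, s_1 + s_2 ≢ 0 (mod k), and γ_2/σ(γ_1) ∈ θ_q(𝔽_{q^k})], where θ_q(𝔽_{q^k}) = {x^{q−1} : x ∈ 𝔽_{q^k}}. -/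
lemma gcd_dvd_q_sub_one (q s k : ℕ) (hq : 1 ≤ q) (hs : 1 ≤ s) (hk : 2 ≤ k)
    (hgcd : Nat.gcd s k = 1) : Nat.gcd (q ^ s - 1) (q ^ k - 1) ∣ q - 1 := by
  obtain ⟨a, -, ha⟩ := Nat.exists_mul_mod_eq_one_of_coprime (k := k) (n := s) hgcd (by omega)
  obtain ⟨B, hdiv⟩ : ∃ B, k * B + 1 = s * a :=
    ⟨s * a / k, by have := Nat.div_add_mod (s * a) k; omega⟩
  set d := Nat.gcd (q ^ s - 1) (q ^ k - 1) with hd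
  have h1 : d ∣ q ^ (s * a) - 1 := by
    refine (Nat.gcd_dvd_left _ _).trans ?_
    have := Nat.sub_dvd_pow_sub_pow (q ^ s) 1 a
    simpa [← pow_mul] using this
  have h2 : d ∣ q ^ (s * a) - q := by
    have hk1 : d ∣ q ^ (k * B) - 1 := by
      refine (Nat.gcd_dvd_right _ _).trans ?_
      have := Nat.sub_dvd_pow_sub_pow (q ^ k) 1 B
      simpa [← pow_mul] using this
    have h1le : 1 ≤ q ^ (k * B) := Nat.one_le_pow _ _ (by omega)
    have hqq : q ^ (k * B) * q = q ^ (s * a) := by rw [← hdiv, pow_succ]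
    have heq : q * (q ^ (k * B) - 1) = q ^ (s * a) - q := by
      rw [Nat.mul_sub, mul_one, mul_comm, hqq]
    exact heq ▸ hk1.mul_left q
  have hqA : q ≤ q ^ (s * a) := Nat.le_self_pow (by nlinarith) q
  have heq2 : (q ^ (s * a) - 1) - (q ^ (s * a) - q) = q - 1 := by omega
  exact heq2 ▸ Nat.dvd_sub h1 h2

lemma exists_pow_eq_pow {F : Type*} [Field F] [Finite F] (q s k : ℕ)
    (hq : 2 ≤ q) (hs : 1 ≤ s) (hk : 2 ≤ k) (hgcd : Nat.gcd s k = 1)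
    (hcard : Nat.card F = q ^ k) (x : Fˣ) :
    ∃ u : Fˣ, u ^ (q ^ s - 1) = x ^ (q - 1) := by
  have hN : Nat.card Fˣ = q ^ k - 1 := by rw [Nat.card_units, hcard]
  set N := q ^ k - 1 with hNdef
  set e := q ^ s - 1 with hedef
  set d := Nat.gcd e N with hddef
  obtain ⟨c, hc⟩ : d ∣ q - 1 := gcd_dvd_q_sub_one q s k (by omega) hs hk hgcd
  have hbez : (d : ℤ) = e * Nat.gcdA e N + N * Nat.gcdB e N := Nat.gcd_eq_gcd_ab e N
  refine ⟨x ^ (c * Nat.gcdA e N), ?_⟩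
  have hxN : x ^ (N : ℤ) = 1 := by
    rw [zpow_natCast, ← hN, pow_card_eq_one']
  have key : (c * Nat.gcdA e N) * (e : ℤ) = ((q - 1 : ℕ) : ℤ) + (N : ℤ) * (-(c * Nat.gcdB e N)) := by
    have : ((q - 1 : ℕ) : ℤ) = (d : ℤ) * c := by exact_mod_cast congrArg (Nat.cast : ℕ → ℤ) hc
    rw [this, hbez]; ring
  calc (x ^ (c * Nat.gcdA e N)) ^ e = x ^ ((c * Nat.gcdA e N) * (e : ℤ)) := by
        rw [← zpow_natCast, ← zpow_mul]
    _ = x ^ ((q - 1 : ℕ) : ℤ) * (x ^ (N : ℤ)) ^ (-(c * Nat.gcdB e N)) := by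
        rw [key, zpow_add, zpow_mul]
    _ = x ^ (q - 1) := by rw [hxN, one_zpow, mul_one, zpow_natCast]


open Polynomial in
lemma vanish_qpoly {L : Type*} [Field L] [Fintype L] (F : Subfield L) (q k : ℕ)
    (hq : 2 ≤ q) (hk : 1 ≤ k) (hF : Nat.card F = q ^ k) {m : ℕ}
    (c : Fin m → L) (e : Fin m → ℕ) (he : ∀ i, e i < k) (hinj : Function.Injective e)
    (hz : ∀ a : L, a ∈ F → (∑ i, c i * a ^ q ^ e i) = 0) (j : Fin m) : c j = 0 := by
  classical
  letI : Fintype F := Fintype.ofFinite F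
  have hcard : Fintype.card F = q ^ k := by rw [← Nat.card_eq_fintype_card]; exact hF
  set P : L[X] := ∑ i, Polynomial.C (c i) * Polynomial.X ^ (q ^ e i) with hP
  have hdeg : P.natDegree < q ^ k := by
    have h1 : P.natDegree ≤ q ^ (k - 1) := by
      refine natDegree_sum_le_of_forall_le _ _ (fun i _ => ?_)
      refine (natDegree_C_mul_le _ _).trans ?_
      rw [natDegree_X_pow]
      exact Nat.pow_le_pow_right (by omega) (by have := he i; omega)
    exact lt_of_le_of_lt h1 (Nat.pow_lt_pow_right hq (by omega))
  have hP0 : P = 0 := by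
    refine eq_zero_of_natDegree_lt_card_of_eval_eq_zero P
      (f := fun a : F => (a : L)) Subtype.coe_injective (fun a => ?_) (by rw [hcard]; exact hdeg)
    rw [hP]
    simp only [eval_finset_sum, eval_mul, eval_C, eval_pow, eval_X]
    exact hz a a.2
  have hco := congrArg (fun Q : L[X] => Q.coeff (q ^ e j)) hP0
  simp only [hP, finset_sum_coeff, coeff_C_mul, coeff_X_pow, coeff_zero] at hco
  rw [Finset.sum_eq_single j] at hco
  · simpa using hco
  · intro i _ hij
    have : q ^ e i ≠ q ^ e j := fun hh =>
      hij (hinj (Nat.pow_right_injective hq hh))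
    simp [Ne.symm this]
  · simp


open Polynomial in
lemma subfield_eq_fixed {L : Type*} [Field L] [Fintype L] (F : Subfield L) (Q : ℕ)
    (hQ : 2 ≤ Q) (hF : Nat.card F = Q) :
    ∀ x : L, x ∈ F ↔ x ^ Q = x := by
  classical
  letI : Fintype F := Fintype.ofFinite F
  have hcard : Fintype.card F = Q := by rw [← Nat.card_eq_fintype_card]; exact hF
  have hsub : (F : Set L) ⊆ {x : L | x ^ Q = x} := by
    intro x hx
    have : (⟨x, hx⟩ : F) ^ Q = ⟨x, hx⟩ := by
      rw [← hcard]; exact FiniteField.pow_card _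
    have := congrArg (Subtype.val : F → L) this
    simpa using this
  set P : L[X] := X ^ Q - X with hP
  have hPne : P ≠ 0 := by
    intro h0
    have : P.coeff Q = 0 := by rw [h0]; simp
    rw [hP] at this
    simp [coeff_X_pow, coeff_X, Ne.symm (by omega : Q ≠ 1)] at this
  have hroots : {x : L | x ^ Q = x} ⊆ (P.roots.toFinset : Set L) := by
    intro x hx
    simp only [Finset.coe_sort_coe, Multiset.mem_toFinset, Finset.mem_coe, mem_roots hPne]
    simp only [Set.mem_setOf_eq] at hx
    simp [hP, IsRoot.def, hx]
  have hncard : ({x : L | x ^ Q = x} : Set L).ncard ≤ Q := by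
    refine le_trans (Set.ncard_le_ncard hroots (Set.toFinite _)) ?_
    rw [Set.ncard_coe_finset]
    refine le_trans (Multiset.toFinset_card_le _) ?_
    refine le_trans (Polynomial.card_roots' P) ?_
    calc P.natDegree ≤ max (X ^ Q : L[X]).natDegree (X : L[X]).natDegree := natDegree_sub_le _ _
      _ ≤ Q := by simp [natDegree_X_pow]; omega
  have hFcard : (F : Set L).ncard = Q := by
    rw [← Nat.card_coe_set_eq]
    exact hF
  have heq : (F : Set L) = {x : L | x ^ Q = x} :=
    Set.eq_of_subset_of_ncard_le hsub (by rw [hFcard]; exact hncard) (Set.toFinite _)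
  intro x
  constructor
  · intro hx; have : x ∈ {x : L | x ^ Q = x} := heq ▸ hx; exact this
  · intro hx; have : x ∈ (F : Set L) := heq.symm ▸ (hx : x ∈ {x : L | x ^ Q = x}); exact this


lemma orb_eq_iff {L : Type*} [Field L] (V W : Set L) :
    ({X : Set L | ∃ α : L, α ≠ 0 ∧ X = (fun x => α * x) '' V}
      = {X : Set L | ∃ α : L, α ≠ 0 ∧ X = (fun x => α * x) '' W}) ↔
    ∃ α : L, α ≠ 0 ∧ (fun x => α * x) '' V = W := by
  constructor
  · intro hEq
    have hW : W ∈ {X : Set L | ∃ α : L, α ≠ 0 ∧ X = (fun x => α * x) '' W} :=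
      ⟨1, one_ne_zero, by simp⟩
    rw [← hEq] at hW
    obtain ⟨α, hα, hWe⟩ := hW
    exact ⟨α, hα, hWe.symm⟩
  · rintro ⟨α, hα, hαV⟩
    ext X
    simp only [Set.mem_setOf_eq]
    constructor
    · rintro ⟨β, hβ, rfl⟩
      refine ⟨β * α⁻¹, by simp [hβ, hα], ?_⟩
      rw [← hαV, Set.image_image]
      have hfun : (fun x => β * α⁻¹ * (α * x)) = fun x : L => β * x := by
        funext x; field_simp
      rw [hfun]
    · rintro ⟨β, hβ, rfl⟩
      refine ⟨β * α, by simp [hβ, hα], ?_⟩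
      rw [← hαV, Set.image_image]
      have hfun : (fun x => β * α * x) = fun x : L => β * (α * x) := by
        funext x; ring_nf
      rw [← hfun]

lemma inj3 {a b c : ℕ} (hab : a ≠ b) (hac : a ≠ c) (hbc : b ≠ c) :
    Function.Injective ![a, b, c] := by
  intro i j hij
  fin_cases i <;> fin_cases j <;> simp_all

lemma inj4 {a b c d : ℕ} (hab : a ≠ b) (hac : a ≠ c) (had : a ≠ d) (hbc : b ≠ c)
    (hbd : b ≠ d) (hcd : c ≠ d) : Function.Injective ![a, b, c, d] := by
  intro i j hij
  fin_cases i <;> fin_cases j <;> simp_all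

lemma core_lemma (p h q k : ℕ) (hp : p.Prime) (hh : 0 < h) (hq : q = p ^ h)
    (hk : 2 < k)
    (L : Type*) [Field L] [Fintype L] (hL : Fintype.card L = q ^ (2 * k))
    (F : Subfield L) (hF : Nat.card F = q ^ k)
    (s₁ s₂ : ℕ) (hs₁1 : 1 ≤ s₁) (hs₁k : s₁ ≤ k) (hgcd₁ : Nat.gcd s₁ k = 1)
    (hs₂1 : 1 ≤ s₂) (hs₂k : s₂ ≤ k) (hgcd₂ : Nat.gcd s₂ k = 1)
    (γ' γ₂ : L) (hγ' : γ' ∉ F) (hγ₂ : γ₂ ∉ F) :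
    (∃ α : L, α ≠ 0 ∧ (fun x => α * x) '' {x : L | ∃ a ∈ F, x = a + γ' * a ^ q ^ s₁}
        = {x : L | ∃ a ∈ F, x = a + γ₂ * a ^ q ^ s₂}) ↔
    ((s₁ ≠ s₂ ∧ k ∣ (s₁ + s₂) ∧ γ' * γ₂ ∈ {y : L | ∃ x ∈ F, y = x ^ (q - 1)}) ∨
     (s₁ = s₂ ∧ ¬ (k ∣ (s₁ + s₂)) ∧ γ₂ / γ' ∈ {y : L | ∃ x ∈ F, y = x ^ (q - 1)})) := by
  -- basic numerology
  have hq2 : 2 ≤ q := by rw [hq]; calc 2 ≤ p := hp.two_le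
                                       _ ≤ p ^ h := Nat.le_self_pow (by omega) p
  have hs₁k' : s₁ < k := by
    rcases Nat.lt_or_ge s₁ k with h' | h'
    · exact h'
    · exfalso; have : s₁ = k := by omega
      rw [this, Nat.gcd_self] at hgcd₁; omega
  have hs₂k' : s₂ < k := by
    rcases Nat.lt_or_ge s₂ k with h' | h'
    · exact h'
    · exfalso; have : s₂ = k := by omega
      rw [this, Nat.gcd_self] at hgcd₂; omega
  have hQ2 : 2 ≤ q ^ k := by calc 2 ≤ q := hq2
                                  _ ≤ q ^ k := Nat.le_self_pow (by omega) q
  -- membership characterization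
  have hmem : ∀ x : L, x ∈ F ↔ x ^ q ^ k = x := subfield_eq_fixed F (q ^ k) hQ2 hF
  -- char p
  haveI hfact : Fact p.Prime := ⟨hp⟩
  have hcharP : CharP L p := by
    obtain ⟨n, hn1, hn2⟩ := FiniteField.card L (ringChar L)
    have hpr : (ringChar L).Prime := hn1
    have : p ∣ ringChar L := by
      have hdvd : p ∣ Fintype.card L := by
        rw [hL, hq, ← pow_mul]
        exact dvd_pow_self p (by positivity)
      rw [hn2] at hdvd
      exact hp.dvd_of_dvd_pow hdvd
    have hrp : ringChar L = p := ((Nat.prime_dvd_prime_iff_eq hp hpr).mp this).symm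
    exact hrp ▸ ringChar.charP L
  haveI := hcharP
  have hfrob : ∀ (x y : L) (m : ℕ), (x + y) ^ q ^ m = x ^ q ^ m + y ^ q ^ m := by
    intro x y m
    rw [hq, ← pow_mul]
    exact add_pow_char_pow x y p (h * m)
  -- reduction of exponents
  have hred : ∀ a : L, a ∈ F → ∀ m : ℕ, a ^ q ^ m = a ^ q ^ (m % k) := by
    intro a ha m
    induction m using Nat.strong_induction_on with
    | _ m ih =>
      by_cases hm : m < k
      · rw [Nat.mod_eq_of_lt hm]
      · push_neg at hm
        have h1 : a ^ q ^ m = a ^ q ^ (m - k) := by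
          have hqe : q ^ m = q ^ k * q ^ (m - k) := by rw [← pow_add]; congr 1; omega
          rw [hqe, pow_mul, (hmem a).mp ha]
        rw [h1, ih (m - k) (by omega), Nat.mod_eq_sub_mod hm]
  have hγ₂0 : γ₂ ≠ 0 := fun h0 => hγ₂ (h0 ▸ F.zero_mem)
  have hγ'0 : γ' ≠ 0 := fun h0 => hγ' (h0 ▸ F.zero_mem)
  -- decomposition wrt basis (1, γ₂)
  have huniq : ∀ c d c' d' : L, c ∈ F → d ∈ F → c' ∈ F → d' ∈ F →
      c + d * γ₂ = c' + d' * γ₂ → c = c' ∧ d = d' := by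
    intro c d c' d' hc hd hc' hd' heq
    have hdd : d = d' := by
      by_contra hne
      apply hγ₂
      have : (d - d') * γ₂ = c' - c := by linear_combination heq
      have hγeq : γ₂ = (c' - c) * (d - d')⁻¹ := by
        field_simp [sub_ne_zero.mpr hne] at this ⊢
        linear_combination this
      rw [hγeq]
      exact F.mul_mem (F.sub_mem hc' hc) (F.inv_mem (F.sub_mem hd hd'))
    refine ⟨?_, hdd⟩
    rw [hdd] at heq
    exact add_right_cancel heq
  have hdec : ∀ x : L, ∃ c d : L, c ∈ F ∧ d ∈ F ∧ x = c + d * γ₂ := by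
    classical
    letI : Fintype F := Fintype.ofFinite F
    have hcardF : Fintype.card F = q ^ k := by rw [← Nat.card_eq_fintype_card]; exact hF
    set f : F × F → L := fun z => (z.1 : L) + (z.2 : L) * γ₂ with hf
    have hinj : Function.Injective f := by
      rintro ⟨c, d⟩ ⟨c', d'⟩ heq
      obtain ⟨h1, h2⟩ := huniq c d c' d' c.2 d.2 c'.2 d'.2 heq
      simp only [Prod.mk.injEq]
      exact ⟨Subtype.ext h1, Subtype.ext h2⟩
    have hcards : Fintype.card (F × F) = Fintype.card L := by
      rw [Fintype.card_prod, hcardF, hL, ← pow_add, two_mul]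
    have hbij : Function.Bijective f :=
      (Fintype.bijective_iff_injective_and_card f).mpr ⟨hinj, hcards⟩
    intro x
    obtain ⟨⟨c, d⟩, hz⟩ := hbij.2 x
    exact ⟨c, d, c.2, d.2, hz.symm⟩
  constructor
  · rintro ⟨α, hα0, hE⟩
    obtain ⟨A, B, hA, hB, hAB⟩ := hdec (α * γ')
    obtain ⟨C, D, hC, hD, hCD⟩ := hdec α
    have hkey : ∀ a : L, a ∈ F →
        (C * a + A * a ^ q ^ s₁) ^ q ^ s₂ = D * a + B * a ^ q ^ s₁ := by
      intro a ha
      have hmemU : α * (a + γ' * a ^ q ^ s₁) ∈ {x : L | ∃ b ∈ F, x = b + γ₂ * b ^ q ^ s₂} := by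
        rw [← hE]
        exact ⟨a + γ' * a ^ q ^ s₁, ⟨a, ha, rfl⟩, rfl⟩
      obtain ⟨b, hb, hbe⟩ := hmemU
      have hexp : (C * a + A * a ^ q ^ s₁) + (D * a + B * a ^ q ^ s₁) * γ₂
          = b + b ^ q ^ s₂ * γ₂ := by
        have h1 : α * (a + γ' * a ^ q ^ s₁) = α * a + (α * γ') * a ^ q ^ s₁ := by ring
        rw [h1, hAB, hCD] at hbe
        linear_combination hbe
      obtain ⟨h1, h2⟩ := huniq _ _ _ _
        (F.add_mem (F.mul_mem hC ha) (F.mul_mem hA (F.pow_mem ha _)))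
        (F.add_mem (F.mul_mem hD ha) (F.mul_mem hB (F.pow_mem ha _)))
        hb (F.pow_mem hb _) hexp
      rw [h1, h2]
    have hrel : ∀ a : L, a ∈ F → D * a + B * a ^ q ^ s₁ - (C ^ q ^ s₂) * a ^ q ^ s₂
        - (A ^ q ^ s₂) * a ^ q ^ ((s₁ + s₂) % k) = 0 := by
      intro a ha
      have hk1 := hkey a ha
      have hfr : (C * a + A * a ^ q ^ s₁) ^ q ^ s₂
          = C ^ q ^ s₂ * a ^ q ^ s₂ + A ^ q ^ s₂ * a ^ q ^ ((s₁ + s₂) % k) := by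
        rw [hfrob, mul_pow, mul_pow, ← pow_mul, ← pow_add, hred a ha (s₁ + s₂)]
      rw [hfr] at hk1
      linear_combination -hk1
    by_cases hdvd : k ∣ (s₁ + s₂)
    · have ht0 : (s₁ + s₂) % k = 0 := Nat.mod_eq_zero_of_dvd hdvd
      have hne : s₁ ≠ s₂ := by
        intro hss
        have h2s : k ∣ s₁ * 2 := by
          have : s₁ + s₂ = s₁ * 2 := by omega
          rwa [this] at hdvd
        have hcop : Nat.Coprime k s₁ := Nat.coprime_comm.mp hgcd₁
        have hk2 : k ∣ 2 := hcop.dvd_of_dvd_mul_left h2s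
        have := Nat.le_of_dvd (by omega) hk2
        omega
      have hrel3 : ∀ a : L, a ∈ F →
          (∑ i, (![D - A ^ q ^ s₂, B, -(C ^ q ^ s₂)] i) * a ^ q ^ (![0, s₁, s₂] i)) = 0 := by
        intro a ha
        have hr := hrel a ha
        rw [ht0] at hr
        simp only [Fin.sum_univ_three, Matrix.cons_val_zero, Matrix.cons_val_one,
          Matrix.head_cons, Matrix.cons_val_two, Matrix.tail_cons, pow_zero, pow_one]
        linear_combination hr
      have hebd : ∀ i, (![0, s₁, s₂] : Fin 3 → ℕ) i < k := by
        intro i; fin_cases i <;> simp <;> omega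
      have hinj := inj3 (a := 0) (b := s₁) (c := s₂) (by omega) (by omega) hne
      have hDA := vanish_qpoly F q k hq2 (by omega) hF _ _ hebd hinj hrel3 0
      have hB0 := vanish_qpoly F q k hq2 (by omega) hF _ _ hebd hinj hrel3 1
      have hC0 := vanish_qpoly F q k hq2 (by omega) hF _ _ hebd hinj hrel3 2
      simp only [Matrix.cons_val_zero, Matrix.cons_val_one, Matrix.head_cons,
        Matrix.cons_val_two, Matrix.tail_cons, neg_eq_zero, sub_eq_zero] at hDA hB0 hC0
      -- hDA : D = A ^ q ^ s₂, hB0 : B = 0, hC0 : C ^ q ^ s₂ = 0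
      have hCzero : C = 0 := by
        have := pow_eq_zero_iff (n := q ^ s₂) (by positivity) |>.mp hC0
        exact this
      have hαD : α = D * γ₂ := by rw [hCD, hCzero]; ring
      have hD0 : D ≠ 0 := by
        intro h0; rw [h0] at hαD; simp at hαD; exact hα0 hαD
      have hAeq : A = D * (γ' * γ₂) := by
        have : α * γ' = A + B * γ₂ := hAB
        rw [hB0, hαD] at this
        linear_combination -this
      set w : L := γ' * γ₂ with hw
      have hwF : w ∈ F := by
        have : w = D⁻¹ * A := by rw [hAeq]; field_simp
        rw [this]
        exact F.mul_mem (F.inv_mem hD) hA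
      have hDw : D = D ^ q ^ s₂ * w ^ q ^ s₂ := by
        calc D = A ^ q ^ s₂ := hDA
          _ = (D * w) ^ q ^ s₂ := by rw [← hAeq]
          _ = D ^ q ^ s₂ * w ^ q ^ s₂ := mul_pow _ _ _
      obtain ⟨g, hg⟩ : (q - 1) ∣ (q ^ s₂ - 1) := by
        simpa using Nat.sub_dvd_pow_sub_pow q 1 s₂
      have hE2 : 1 ≤ q ^ s₂ := Nat.one_le_pow _ _ (by omega)
      have hwpow : w ^ q ^ s₂ = (D⁻¹) ^ (q ^ s₂ - 1) := by
        have hDp : D ^ q ^ s₂ ≠ 0 := pow_ne_zero _ hD0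
        have hDsplit : D ^ q ^ s₂ = D ^ (q ^ s₂ - 1) * D := by
          rw [← pow_succ]; congr 1; omega
        rw [hDsplit] at hDw
        rw [inv_pow]; apply eq_inv_of_mul_eq_one_left
        apply mul_right_cancel₀ hD0
        rw [one_mul]
        linear_combination -hDw
      have hwfix : w ^ q ^ k = w := (hmem w).mp hwF
      have hwfull : w = ((D⁻¹) ^ (g * q ^ (k - s₂))) ^ (q - 1) := by
        calc w = (w ^ q ^ s₂) ^ q ^ (k - s₂) := by
              rw [← pow_mul, ← pow_add]
              have : s₂ + (k - s₂) = k := by omega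
              rw [this, hwfix]
          _ = ((D⁻¹) ^ (q ^ s₂ - 1)) ^ q ^ (k - s₂) := by rw [hwpow]
          _ = (D⁻¹) ^ ((q - 1) * (g * q ^ (k - s₂))) := by
              rw [← pow_mul, hg]; ring_nf
          _ = ((D⁻¹) ^ (g * q ^ (k - s₂))) ^ (q - 1) := by
              rw [← pow_mul]; ring_nf
      exact Or.inl ⟨hne, hdvd, (D⁻¹) ^ (g * q ^ (k - s₂)),
        F.pow_mem (F.inv_mem hD) _, hwfull⟩
    · have ht0 : (s₁ + s₂) % k ≠ 0 := by
        intro h0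
        exact hdvd (Nat.dvd_iff_mod_eq_zero.mpr h0)
      have htlt : (s₁ + s₂) % k < k := Nat.mod_lt _ (by omega)
      have hts₁ : (s₁ + s₂) % k ≠ s₁ := by
        intro hts
        have hmod : (s₁ + s₂) % k = s₁ % k := by rw [hts, Nat.mod_eq_of_lt hs₁k']
        have : k ∣ s₂ := (Nat.modEq_iff_dvd' (by omega)).mp hmod.symm |> fun hh => by
          simpa using hh
        have := Nat.le_of_dvd (by omega) this
        omega
      have hts₂ : (s₁ + s₂) % k ≠ s₂ := by
        intro hts
        have hmod : (s₂ + s₁) % k = s₂ % k := by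
          rw [Nat.add_comm s₂ s₁, hts, Nat.mod_eq_of_lt hs₂k']
        have : k ∣ s₁ := (Nat.modEq_iff_dvd' (by omega)).mp hmod.symm |> fun hh => by
          simpa using hh
        have := Nat.le_of_dvd (by omega) this
        omega
      by_cases hss : s₁ = s₂
      · -- three distinct exponents 0, s₁, t
        have hrel3 : ∀ a : L, a ∈ F →
            (∑ i, (![D, B - C ^ q ^ s₂, -(A ^ q ^ s₂)] i) * a ^ q ^ (![0, s₁, (s₁ + s₂) % k] i)) = 0 := by
          intro a ha
          have hr := hrel a ha
          rw [← hss] at hr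
          simp only [Fin.sum_univ_three, Matrix.cons_val_zero, Matrix.cons_val_one,
            Matrix.head_cons, Matrix.cons_val_two, Matrix.tail_cons, pow_zero, pow_one]
          rw [← hss]
          linear_combination hr
        have hebd : ∀ i, (![0, s₁, (s₁ + s₂) % k] : Fin 3 → ℕ) i < k := by
          intro i; fin_cases i <;> simp <;> omega
        have hinj := inj3 (a := 0) (b := s₁) (c := (s₁ + s₂) % k) (by omega) (by omega)
          (fun hh => hts₁ hh.symm)
        have hD0' := vanish_qpoly F q k hq2 (by omega) hF _ _ hebd hinj hrel3 0
        have hBC := vanish_qpoly F q k hq2 (by omega) hF _ _ hebd hinj hrel3 1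
        have hA0 := vanish_qpoly F q k hq2 (by omega) hF _ _ hebd hinj hrel3 2
        simp only [Matrix.cons_val_zero, Matrix.cons_val_one, Matrix.head_cons,
          Matrix.cons_val_two, Matrix.tail_cons, neg_eq_zero, sub_eq_zero] at hD0' hBC hA0
        have hAzero : A = 0 := pow_eq_zero_iff (n := q ^ s₂) (by positivity) |>.mp hA0
        have hαC : α = C := by rw [hCD, hD0']; ring
        have hC0 : C ≠ 0 := fun h0 => hα0 (by rw [hαC, h0])
        have hCg : C * γ' = C ^ q ^ s₂ * γ₂ := by
          have : α * γ' = A + B * γ₂ := hAB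
          rw [hαC, hAzero, hBC] at this
          linear_combination this
        obtain ⟨g, hg⟩ : (q - 1) ∣ (q ^ s₂ - 1) := by
          simpa using Nat.sub_dvd_pow_sub_pow q 1 s₂
        have hγdiv : γ₂ / γ' = ((C⁻¹) ^ g) ^ (q - 1) := by
          have hCp : C ^ q ^ s₂ ≠ 0 := pow_ne_zero _ hC0
          have hCsplit : C ^ q ^ s₂ = C ^ (q ^ s₂ - 1) * C := by
            rw [← pow_succ]; congr 1
            have : 1 ≤ q ^ s₂ := Nat.one_le_pow _ _ (by omega)
            omega
          have h2 : γ₂ / γ' = C / C ^ q ^ s₂ :=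
            (div_eq_div_iff hγ'0 hCp).mpr (by linear_combination -hCg)
          rw [h2, hCsplit]
          rw [← pow_mul, mul_comm g (q - 1), ← hg, inv_pow]
          field_simp
        exact Or.inr ⟨hss, hdvd, (C⁻¹) ^ g, F.pow_mem (F.inv_mem hC) _, hγdiv⟩
      · -- four distinct exponents: contradiction
        exfalso
        have hrel4 : ∀ a : L, a ∈ F →
            (∑ i, (![D, B, -(C ^ q ^ s₂), -(A ^ q ^ s₂)] i)
              * a ^ q ^ (![0, s₁, s₂, (s₁ + s₂) % k] i)) = 0 := by
          intro a ha
          have hr := hrel a ha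
          simp only [Fin.sum_univ_four, Matrix.cons_val_zero, Matrix.cons_val_one,
            Matrix.head_cons, Matrix.cons_val_two, Matrix.tail_cons, Matrix.cons_val_three,
            pow_zero, pow_one]
          linear_combination hr
        have hebd : ∀ i, (![0, s₁, s₂, (s₁ + s₂) % k] : Fin 4 → ℕ) i < k := by
          intro i; fin_cases i <;> simp <;> omega
        have hinj := inj4 (a := 0) (b := s₁) (c := s₂) (d := (s₁ + s₂) % k)
          (by omega) (by omega) (fun hh => ht0 hh.symm) hss
          (fun hh => hts₁ hh.symm) (fun hh => hts₂ hh.symm)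
        have hD0' := vanish_qpoly F q k hq2 (by omega) hF _ _ hebd hinj hrel4 0
        have hC0' := vanish_qpoly F q k hq2 (by omega) hF _ _ hebd hinj hrel4 2
        simp only [Matrix.cons_val_zero, Matrix.cons_val_one, Matrix.head_cons,
          Matrix.cons_val_two, Matrix.tail_cons, neg_eq_zero] at hD0' hC0'
        have hCzero : C = 0 := pow_eq_zero_iff (n := q ^ s₂) (by positivity) |>.mp hC0'
        apply hα0
        rw [hCD, hCzero, hD0']
        ring
  · rintro (⟨hne, hdvd, x, hxF, hw⟩ | ⟨hss, hndvd, x, hxF, hw⟩)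
    · -- branch 1 : s₁ + s₂ = k
      have hkeq : s₁ + s₂ = k := by
        obtain ⟨c, hc⟩ := hdvd
        have hc2 : c < 2 := Nat.lt_of_mul_lt_mul_left (a := k) (by omega)
        have hc01 : c = 0 ∨ c = 1 := by omega
        rcases hc01 with rfl | rfl
        · omega
        · omega
      have hx0 : x ≠ 0 := by
        intro h0
        rw [h0, zero_pow (by omega : q - 1 ≠ 0)] at hw
        exact mul_ne_zero hγ'0 hγ₂0 hw
      have hxF0 : (⟨x, hxF⟩ : F) ≠ 0 := fun hh => hx0 (by simpa using congrArg Subtype.val hh)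
      set xu : Fˣ := Units.mk0 ⟨x, hxF⟩ hxF0 with hxu
      obtain ⟨u, hu⟩ := exists_pow_eq_pow q s₂ k hq2 hs₂1 (by omega) hgcd₂ hF ((xu ^ q ^ s₂)⁻¹)
      have hsplit : u ^ q ^ s₂ = u ^ (q ^ s₂ - 1) * u := by
        rw [← pow_succ]; congr 1
        have : 1 ≤ q ^ s₂ := Nat.one_le_pow _ _ (by omega)
        omega
      have hkeyu : (xu ^ (q - 1) * u) ^ q ^ s₂ = u := by
        calc (xu ^ (q - 1) * u) ^ q ^ s₂
            = (xu ^ q ^ s₂) ^ (q - 1) * (u ^ (q ^ s₂ - 1) * u) := by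
              rw [mul_pow, ← pow_mul, mul_comm (q - 1) (q ^ s₂), pow_mul, hsplit]
          _ = (xu ^ q ^ s₂) ^ (q - 1) * (((xu ^ q ^ s₂)⁻¹) ^ (q - 1) * u) := by rw [hu]
          _ = u := by rw [inv_pow]; exact mul_inv_cancel_left _ _
      set D : L := ((u : F) : L) with hDdef
      have hDF : D ∈ F := SetLike.coe_mem _
      have hD0 : D ≠ 0 := fun h0 => Units.ne_zero u (ZeroMemClass.coe_eq_zero.mp h0)
      have hkeyL : (x ^ (q - 1) * D) ^ q ^ s₂ = D := by
        have hco := congrArg (fun t : Fˣ => ((t : F) : L)) hkeyu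
        push_cast at hco
        exact hco
      have hDkey : (γ' * γ₂ * D) ^ q ^ s₂ = D := by rw [hw]; exact hkeyL
      have hwDF : γ' * γ₂ * D ∈ F := by
        rw [hw]; exact F.mul_mem (F.pow_mem hxF _) hDF
      have hwD0 : γ' * γ₂ * D ≠ 0 := mul_ne_zero (mul_ne_zero hγ'0 hγ₂0) hD0
      have hcomp : ∀ a : L, a ∈ F → (D * γ₂) * (a + γ' * a ^ q ^ s₁)
          = (γ' * γ₂ * D * a ^ q ^ s₁) + γ₂ * (γ' * γ₂ * D * a ^ q ^ s₁) ^ q ^ s₂ := by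
        intro a ha
        have h1 : (γ' * γ₂ * D * a ^ q ^ s₁) ^ q ^ s₂ = D * a := by
          rw [mul_pow, hDkey, ← pow_mul, ← pow_add, hkeq, (hmem a).mp ha]
        rw [h1]; ring
      refine ⟨D * γ₂, mul_ne_zero hD0 hγ₂0, ?_⟩
      ext z
      simp only [Set.mem_image, Set.mem_setOf_eq]
      constructor
      · rintro ⟨x', ⟨a, ha, rfl⟩, rfl⟩
        exact ⟨γ' * γ₂ * D * a ^ q ^ s₁,
          F.mul_mem hwDF (F.pow_mem ha _), hcomp a ha⟩
      · rintro ⟨b, hb, rfl⟩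
        set a : L := ((γ' * γ₂ * D)⁻¹ * b) ^ q ^ (k - s₁) with ha
        have haF : a ∈ F := F.pow_mem (F.mul_mem (F.inv_mem hwDF) hb) _
        have haE : γ' * γ₂ * D * a ^ q ^ s₁ = b := by
          have h2 : a ^ q ^ s₁ = (γ' * γ₂ * D)⁻¹ * b := by
            rw [ha, ← pow_mul, ← pow_add]
            have hk' : (k - s₁) + s₁ = k := by omega
            rw [hk', (hmem _).mp (F.mul_mem (F.inv_mem hwDF) hb)]
          rw [h2]
          field_simp
        exact ⟨a + γ' * a ^ q ^ s₁, ⟨a, haF, rfl⟩, by rw [hcomp a haF, haE]⟩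
    · -- branch 2 : s₁ = s₂
      subst hss
      have hx0 : x ≠ 0 := by
        intro h0
        rw [h0, zero_pow (by omega : q - 1 ≠ 0)] at hw
        exact div_ne_zero hγ₂0 hγ'0 hw
      have hγ₂eq : γ₂ = x ^ (q - 1) * γ' := by
        have := (div_eq_iff hγ'0).mp hw
        linear_combination this
      have hxF0 : (⟨x, hxF⟩ : F) ≠ 0 := fun hh => hx0 (by simpa using congrArg Subtype.val hh)
      set xu : Fˣ := Units.mk0 ⟨x, hxF⟩ hxF0 with hxu
      obtain ⟨u, hu⟩ := exists_pow_eq_pow q s₁ k hq2 hs₁1 (by omega) hgcd₁ hF xu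
      have hsplit : u ^ (q ^ s₁ - 1) * u = u ^ q ^ s₁ := by
        rw [← pow_succ]; congr 1
        have : 1 ≤ q ^ s₁ := Nat.one_le_pow _ _ (by omega)
        omega
      have hkeyu : (u⁻¹) ^ q ^ s₁ * xu ^ (q - 1) = u⁻¹ := by
        rw [← hu, inv_pow, inv_mul_eq_iff_eq_mul, ← hsplit]
        group
      set Du : L := ((u : F) : L) with hDudef
      have hDu0 : Du ≠ 0 := fun h0 => Units.ne_zero u (ZeroMemClass.coe_eq_zero.mp h0)
      set α : L := Du⁻¹ with hαdef
      have hαF : α ∈ F := F.inv_mem (SetLike.coe_mem _)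
      have hα0 : α ≠ 0 := inv_ne_zero hDu0
      have hαx : α ^ q ^ s₁ * x ^ (q - 1) = α := by
        have hco := congrArg (fun t : Fˣ => ((t : F) : L)) hkeyu
        push_cast at hco
        exact hco
      have hαkey : α * γ' = α ^ q ^ s₁ * γ₂ := by
        rw [hγ₂eq]
        linear_combination γ' * hαx.symm
      have hcomp : ∀ a : L, a ∈ F → α * (a + γ' * a ^ q ^ s₁)
          = (α * a) + γ₂ * (α * a) ^ q ^ s₁ := by
        intro a ha
        rw [mul_pow]
        linear_combination a ^ q ^ s₁ * hαkey
      refine ⟨α, hα0, ?_⟩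
      ext z
      simp only [Set.mem_image, Set.mem_setOf_eq]
      constructor
      · rintro ⟨x', ⟨a, ha, rfl⟩, rfl⟩
        exact ⟨α * a, F.mul_mem hαF ha, hcomp a ha⟩
      · rintro ⟨b, hb, rfl⟩
        have haF : α⁻¹ * b ∈ F := F.mul_mem (F.inv_mem hαF) hb
        refine ⟨α⁻¹ * b + γ' * (α⁻¹ * b) ^ q ^ s₁, ⟨α⁻¹ * b, haF, rfl⟩, ?_⟩
        rw [hcomp _ haF]
        have : α * (α⁻¹ * b) = b := by field_simp
        rw [this]

theorem statement_15 (p h q k : ℕ) (hp : p.Prime) (hh : 0 < h) (hq : q = p ^ h)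
    (hk : 2 < k)
    (L : Type*) [Field L] [Fintype L] (hL : Fintype.card L = q ^ (2 * k))
    (F : Subfield L) (hF : Nat.card F = q ^ k)
    (s₁ s₂ : ℕ) (hs₁1 : 1 ≤ s₁) (hs₁k : s₁ ≤ k) (hgcd₁ : Nat.gcd s₁ k = 1)
    (hs₂1 : 1 ≤ s₂) (hs₂k : s₂ ≤ k) (hgcd₂ : Nat.gcd s₂ k = 1)
    (γ₁ γ₂ : L) (hγ₁ : γ₁ ∉ F) (hγ₂ : γ₂ ∉ F)
    (σ : L ≃+* L) :
    ((fun V : Set L => σ '' V) ''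
        {V : Set L | ∃ α : L, α ≠ 0 ∧
          V = (fun x => α * x) '' {x : L | ∃ a ∈ F, x = a + γ₁ * a ^ q ^ s₁}}
      = {V : Set L | ∃ α : L, α ≠ 0 ∧
          V = (fun x => α * x) '' {x : L | ∃ a ∈ F, x = a + γ₂ * a ^ q ^ s₂}}) ↔
    ((s₁ ≠ s₂ ∧ k ∣ (s₁ + s₂) ∧ σ γ₁ * γ₂ ∈ {y : L | ∃ x ∈ F, y = x ^ (q - 1)}) ∨
     (s₁ = s₂ ∧ ¬ (k ∣ (s₁ + s₂)) ∧ γ₂ / σ γ₁ ∈ {y : L | ∃ x ∈ F, y = x ^ (q - 1)})) := by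
  have hq2 : 2 ≤ q := by rw [hq]; calc 2 ≤ p := hp.two_le
                                       _ ≤ p ^ h := Nat.le_self_pow (by omega) p
  have hQ2 : 2 ≤ q ^ k := by calc 2 ≤ q := hq2
                                  _ ≤ q ^ k := Nat.le_self_pow (by omega) q
  have hmem : ∀ x : L, x ∈ F ↔ x ^ q ^ k = x := subfield_eq_fixed F (q ^ k) hQ2 hF
  have hσF : ∀ x : L, x ∈ F → σ x ∈ F := by
    intro x hx
    rw [hmem] at hx ⊢
    rw [← map_pow, hx]
  have hσF' : ∀ x : L, x ∈ F → σ.symm x ∈ F := by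
    intro x hx
    rw [hmem] at hx ⊢
    rw [← map_pow, hx]
  have hσγ₁ : σ γ₁ ∉ F := by
    intro hmem'
    apply hγ₁
    have := hσF' _ hmem'
    rwa [RingEquiv.symm_apply_apply] at this
  have himg : σ '' {x : L | ∃ a ∈ F, x = a + γ₁ * a ^ q ^ s₁}
      = {x : L | ∃ a ∈ F, x = a + σ γ₁ * a ^ q ^ s₁} := by
    ext z
    simp only [Set.mem_image, Set.mem_setOf_eq]
    constructor
    · rintro ⟨x', ⟨a, ha, rfl⟩, rfl⟩
      exact ⟨σ a, hσF a ha, by rw [map_add, map_mul, map_pow]⟩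
    · rintro ⟨a, ha, rfl⟩
      refine ⟨σ.symm a + γ₁ * (σ.symm a) ^ q ^ s₁, ⟨σ.symm a, hσF' a ha, rfl⟩, ?_⟩
      rw [map_add, map_mul, map_pow, RingEquiv.apply_symm_apply]
  have hσorb : (fun V : Set L => σ '' V) ''
      {V : Set L | ∃ α : L, α ≠ 0 ∧
        V = (fun x => α * x) '' {x : L | ∃ a ∈ F, x = a + γ₁ * a ^ q ^ s₁}}
      = {V : Set L | ∃ α : L, α ≠ 0 ∧
        V = (fun x => α * x) '' {x : L | ∃ a ∈ F, x = a + σ γ₁ * a ^ q ^ s₁}} := by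
    ext W
    simp only [Set.mem_image, Set.mem_setOf_eq]
    constructor
    · rintro ⟨V, ⟨α, hα, rfl⟩, rfl⟩
      refine ⟨σ α, fun h0 => hα (σ.injective (by rw [h0, map_zero])), ?_⟩
      rw [Set.image_image, ← himg, Set.image_image]
      have hfn : (fun x => σ (α * x)) = fun x : L => σ α * σ x :=
        funext fun x => map_mul σ α x
      rw [hfn]
    · rintro ⟨β, hβ, rfl⟩
      refine ⟨(fun x => σ.symm β * x) '' {x : L | ∃ a ∈ F, x = a + γ₁ * a ^ q ^ s₁},
        ⟨σ.symm β, fun h0 => hβ (by rw [← RingEquiv.apply_symm_apply σ β, h0, map_zero]), rfl⟩, ?_⟩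
      rw [Set.image_image, ← himg, Set.image_image]
      have hfn : (fun x => σ (σ.symm β * x)) = fun x : L => β * σ x :=
        funext fun x => by rw [map_mul, RingEquiv.apply_symm_apply]
      rw [hfn]
  rw [hσorb, orb_eq_iff]
  exact core_lemma p h q k hp hh hq hk L hL F hF s₁ s₂ hs₁1 hs₁k hgcd₁ hs₂1 hs₂k hgcd₂
    (σ γ₁) γ₂ hσγ₁ hγ₂
end
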